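/- arXiv:2309.03998 — 7 statements merged into one kernel-verified Lean document; each statement's English description precedes it below -/
import Mathlib

section
/- Let (x_k), (y_k) be generated by the Chambolle–Pock iteration x_{k+1} = prox_{τf}(x_k − τ L* y_k), y_{k+1} = prox_{σ g*}(y_k + σ L(x_{k+1} + θ(x_{k+1} − x_k))) with τ, σ > 0, let (x⋆, y⋆) be a KKT point (−L*y⋆ ∈ ∂f(x⋆), Lx⋆ ∈ ∂g*(y⋆)), and define F_k = f(x_{k+1}) − f(x⋆) + ⟨L*y⋆, x_{k+1} − x⋆⟩. Then for every nonnegative integer k, F_{k+1} ≤ (1/τ)⟨x_{k+1} − x_{k+2}, x_{k+2} − x⋆⟩ + ⟨y⋆ − y_{k+1}, Lx_{k+2} − Lx⋆⟩. -/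
open scoped RealInnerProductSpace
open Filter Topology

noncomputable section

/-- The convex subdifferential of an extended-real-valued function:
`∂f(x) = { u : ∀ z, f z ≥ f x + ⟪u, z - x⟫ }`. -/
def ESubdiff {E : Type*} [NormedAddCommGroup E] [InnerProductSpace ℝ E]
    (f : E → EReal) (x : E) : Set E :=
  {u | ∀ z : E, f x + ((⟪u, z - x⟫ : ℝ) : EReal) ≤ f z}

/-- Properness of an extended-real-valued function: it never takes the value `⊥`
and is not identically `⊤`. -/
def EProper {E : Type*} (f : E → EReal) : Prop :=
  (∃ x, f x ≠ ⊤) ∧ ∀ x, f x ≠ ⊥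

/-- Convexity of an extended-real-valued function. -/
def EConvex {E : Type*} [NormedAddCommGroup E] [NormedSpace ℝ E] (f : E → EReal) : Prop :=
  ∀ x y : E, ∀ a b : ℝ, 0 ≤ a → 0 ≤ b → a + b = 1 →
    f (a • x + b • y) ≤ (a : EReal) * f x + (b : EReal) * f y

/-- The convex (Fenchel) conjugate `g*(y) = sup_x (⟪x, y⟫ - g x)`. -/
def EConj {E : Type*} [NormedAddCommGroup E] [InnerProductSpace ℝ E]
    (g : E → EReal) (y : E) : EReal :=
  ⨆ x : E, ((⟪x, y⟫ : ℝ) : EReal) - g x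

/-- `IsProx τ f x p` states that `p = prox_{τ f}(x)`, i.e. `p` minimizes
`fun z => f z + (1/(2τ)) ‖z - x‖²`. -/
def IsProx {E : Type*} [NormedAddCommGroup E] [InnerProductSpace ℝ E]
    (τ : ℝ) (f : E → EReal) (x p : E) : Prop :=
  ∀ z : E, f p + ((1 / (2 * τ) * ‖p - x‖ ^ 2 : ℝ) : EReal)
      ≤ f z + ((1 / (2 * τ) * ‖z - x‖ ^ 2 : ℝ) : EReal)

/-- The Lagrangian `𝓛(x, y) = f x + ⟪y, L x⟫ - g*(y)` of the saddle-point problem. -/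
def Lagr {E F : Type*} [NormedAddCommGroup E] [InnerProductSpace ℝ E]
    [NormedAddCommGroup F] [InnerProductSpace ℝ F]
    (f : E → EReal) (gs : F → EReal) (L : E →L[ℝ] F) (x : E) (y : F) : EReal :=
  f x + ((⟪y, L x⟫ : ℝ) : EReal) - gs y

/-!
`x_{k+2}` is the proximal point of `w = x_{k+1} - τ L* y_{k+1}` for `τ f`, and the proximal
point `p` of a convex function at `w` satisfies `(w - p) / τ ∈ ∂f(p)`: comparing `p` with the
points `p + t (z - p)` of the segment towards `z` and letting `t → 0⁺` gives
`f p + ⟪(w - p) / τ, z - p⟫ ≤ f z`. Taking `z = x⋆` and adding `⟪L* y⋆, x_{k+2} - x⋆⟫`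
to both sides yields the bound on `F_{k+1}` after moving `L*` across the inner product.
-/

open Set

lemma le_of_forall_mem_Ioc_le_add_mul {a b c : ℝ} (h : ∀ t ∈ Ioc (0 : ℝ) 1, a ≤ b + t * c) :
    a ≤ b := by
  have hlim : Tendsto (fun t : ℝ => b + t * c) (𝓝[>] 0) (𝓝 b) := by
    refine Tendsto.mono_left ?_ nhdsWithin_le_nhds
    simpa using (tendsto_id (x := 𝓝 (0 : ℝ))).mul_const c |>.const_add b
  exact ge_of_tendsto hlim (eventually_of_mem (Ioc_mem_nhdsGT one_pos) h)

section Prox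

variable {E : Type*} [NormedAddCommGroup E] [InnerProductSpace ℝ E]
  {f : E → EReal} {τ : ℝ} {w p : E}

lemma EConvex.le_segment_of_eq_coe (hf : EConvex f) {z : E} {A B : ℝ}
    (hA : f p = A) (hB : f z = B) {t : ℝ} (ht₀ : 0 ≤ t) (ht₁ : t ≤ 1) :
    f (p + t • (z - p)) ≤ (((1 - t) * A + t * B : ℝ) : EReal) := by
  have hseg : p + t • (z - p) = (1 - t) • p + t • z := by module
  rw [hseg]
  refine (hf p z (1 - t) t (by linarith) ht₀ (by ring)).trans_eq ?_
  rw [hA, hB]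
  norm_cast

lemma IsProx.add_inner_le_of_eq_coe (hf : EConvex f) (hp : IsProx τ f w p)
    {z : E} {A B : ℝ} (hA : f p = A) (hB : f z = B) :
    A + ⟪τ⁻¹ • (w - p), z - p⟫ ≤ B := by
  set d := z - p
  suffices ∀ t ∈ Ioc (0 : ℝ) 1, A ≤ B + τ⁻¹ * ⟪p - w, d⟫ + t * ((2 * τ)⁻¹ * ‖d‖ ^ 2) by
    have := le_of_forall_mem_Ioc_le_add_mul this
    rw [real_inner_smul_left, ← neg_sub p w, inner_neg_left]
    linarith
  rintro t ⟨ht₀, ht₁⟩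
  have hcomp := (hp (p + t • d)).trans
    (add_le_add_left (hf.le_segment_of_eq_coe hA hB ht₀.le ht₁) _)
  rw [hA] at hcomp
  have hreal : A + (2 * τ)⁻¹ * ‖p - w‖ ^ 2
      ≤ (1 - t) * A + t * B + (2 * τ)⁻¹ * ‖(p - w) + t • d‖ ^ 2 := by
    have hshift : p + t • d - w = (p - w) + t • d := by abel
    rw [← hshift]
    simpa only [one_div] using (by exact_mod_cast hcomp :)
  rw [norm_add_sq_real, real_inner_smul_right, norm_smul, mul_pow, Real.norm_eq_abs,
    sq_abs] at hreal
  have hscaled : t * A ≤ t * (B + τ⁻¹ * ⟪p - w, d⟫ + t * ((2 * τ)⁻¹ * ‖d‖ ^ 2)) := by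
    linear_combination hreal
  exact le_of_mul_le_mul_left hscaled ht₀

theorem IsProx.mem_eSubdiff (hf : EConvex f) (hp : IsProx τ f w p) :
    τ⁻¹ • (w - p) ∈ ESubdiff f p := by
  intro z
  obtain hz_top | hz_top := eq_or_ne (f z) ⊤
  · simp [hz_top]
  obtain hp_bot | hp_bot := eq_or_ne (f p) ⊥
  · simp [hp_bot]
  have hprox := hp z
  have hp_top : f p ≠ ⊤ := by
    intro h
    rw [h, EReal.top_add_of_ne_bot (EReal.coe_ne_bot _), top_le_iff] at hprox
    exact EReal.add_ne_top hz_top (EReal.coe_ne_top _) hprox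
  have hz_bot : f z ≠ ⊥ := by
    intro h
    rw [h, EReal.bot_add, le_bot_iff, EReal.add_eq_bot_iff] at hprox
    exact hprox.elim hp_bot (EReal.coe_ne_bot _)
  rw [← EReal.coe_toReal hp_top hp_bot, ← EReal.coe_toReal hz_top hz_bot]
  exact_mod_cast hp.add_inner_le_of_eq_coe hf (EReal.coe_toReal hp_top hp_bot).symm
    (EReal.coe_toReal hz_top hz_bot).symm

end Prox

theorem Fk_succ_bound_general
    {𝓗 𝓖 : Type*}
    [NormedAddCommGroup 𝓗] [InnerProductSpace ℝ 𝓗] [CompleteSpace 𝓗]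
    [NormedAddCommGroup 𝓖] [InnerProductSpace ℝ 𝓖] [CompleteSpace 𝓖]
    (f : 𝓗 → EReal)
    (hf₂ : EConvex f)
    (L : 𝓗 →L[ℝ] 𝓖)
    (τ : ℝ) (hτ : 0 < τ)
    (xstar : 𝓗) (ystar : 𝓖)
    (x : ℕ → 𝓗) (y : ℕ → 𝓖)
    (hx : ∀ k : ℕ, IsProx τ f (x k - τ • (ContinuousLinearMap.adjoint L) (y k)) (x (k + 1)))
    (F : ℕ → EReal)
    (hF : ∀ k : ℕ, F k = f (x (k + 1)) - f xstar
      + ((⟪(ContinuousLinearMap.adjoint L) ystar, x (k + 1) - xstar⟫ : ℝ) : EReal))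
    :
    ∀ k : ℕ, F (k + 1) ≤ ((1 / τ * ⟪x (k + 1) - x (k + 2), x (k + 2) - xstar⟫
      + ⟪ystar - y (k + 1), L (x (k + 2)) - L xstar⟫ : ℝ) : EReal) := by
  intro k
  set u := τ⁻¹ • (x (k + 1) - τ • (ContinuousLinearMap.adjoint L) (y (k + 1)) - x (k + 2))
  have hsub : f (x (k + 2)) + ((⟪u, xstar - x (k + 2)⟫ : ℝ) : EReal) ≤ f xstar :=
    (hx (k + 1)).mem_eSubdiff hf₂ xstar
  have hgap : f (x (k + 2)) - f xstar ≤ ((⟪u, x (k + 2) - xstar⟫ : ℝ) : EReal) := by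
    refine EReal.sub_le_of_le_add' ?_
    rw [← neg_sub, inner_neg_right, EReal.coe_neg, ← sub_eq_add_neg]
    exact (EReal.le_sub_iff_add_le (.inl (EReal.coe_ne_bot _)) (.inl (EReal.coe_ne_top _))).2 hsub
  have hidentity : ⟪u, x (k + 2) - xstar⟫
      + ⟪(ContinuousLinearMap.adjoint L) ystar, x (k + 2) - xstar⟫
      = 1 / τ * ⟪x (k + 1) - x (k + 2), x (k + 2) - xstar⟫
        + ⟪ystar - y (k + 1), L (x (k + 2)) - L xstar⟫ := by
    simp only [u, inner_sub_left, inner_sub_right, real_inner_smul_left,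
      ContinuousLinearMap.adjoint_inner_left]
    field_simp
    ring
  rw [hF, ← hidentity, EReal.coe_add]
  exact add_le_add hgap le_rfl

theorem Fk_succ_bound
    {𝓗 𝓖 : Type*}
    [NormedAddCommGroup 𝓗] [InnerProductSpace ℝ 𝓗] [CompleteSpace 𝓗]
    [NormedAddCommGroup 𝓖] [InnerProductSpace ℝ 𝓖] [CompleteSpace 𝓖]
    (f : 𝓗 → EReal) (g : 𝓖 → EReal) (gs : 𝓖 → EReal)
    (hf₁ : EProper f) (hf₂ : EConvex f) (hf₃ : LowerSemicontinuous f)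
    (hg₁ : EProper g) (hg₂ : EConvex g) (hg₃ : LowerSemicontinuous g)
    (hgs : gs = EConj g)
    (L : 𝓗 →L[ℝ] 𝓖) (hL : L ≠ 0)
    (τ σ θ : ℝ) (hτ : 0 < τ) (hσ : 0 < σ)
    (θ : ℝ)
    (xstar : 𝓗) (ystar : 𝓖)
    (hkkt₁ : -((ContinuousLinearMap.adjoint L) ystar) ∈ ESubdiff f xstar)
    (hkkt₂ : L xstar ∈ ESubdiff gs ystar)
    (x : ℕ → 𝓗) (y : ℕ → 𝓖)
    (hx : ∀ k : ℕ, IsProx τ f (x k - τ • (ContinuousLinearMap.adjoint L) (y k)) (x (k + 1)))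
    (hy : ∀ k : ℕ,
      IsProx σ gs (y k + σ • L (x (k + 1) + θ • (x (k + 1) - x k))) (y (k + 1)))
    (F : ℕ → EReal)
    (hF : ∀ k : ℕ, F k = f (x (k + 1)) - f xstar
      + ((⟪(ContinuousLinearMap.adjoint L) ystar, x (k + 1) - xstar⟫ : ℝ) : EReal))
    :
    ∀ k : ℕ, F (k + 1) ≤ ((1 / τ * ⟪x (k + 1) - x (k + 2), x (k + 2) - xstar⟫
      + ⟪ystar - y (k + 1), L (x (k + 2)) - L xstar⟫ : ℝ) : EReal) :=
  Fk_succ_bound_general f hf₂ L τ hτ xstar ystar x y hx F hF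
end
end

section
/- Let (x_k), (y_k) be generated by the Chambolle–Pock iteration x_{k+1} = prox_{τf}(x_k − τ L* y_k), y_{k+1} = prox_{σ g*}(y_k + σ L(x_{k+1} + θ(x_{k+1} − x_k))) with τ, σ > 0, let (x⋆, y⋆) be a KKT point (−L*y⋆ ∈ ∂f(x⋆), Lx⋆ ∈ ∂g*(y⋆)), and define F_k = f(x_{k+1}) − f(x⋆) + ⟨L*y⋆, x_{k+1} − x⋆⟩. Then for every nonnegative integer k, F_{k+1} − F_k ≤ −(1/τ)‖x_{k+2} − x_{k+1}‖² + ⟨y⋆ − y_{k+1}, Lx_{k+2} − Lx_{k+1}⟩. -/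
open scoped RealInnerProductSpace
open Filter Topology

noncomputable section

/-!
The optimality condition of a prox step, `(x - p) / τ ∈ ∂f(p)` for `p = prox_{τf}(x)`, follows
by comparing `p` with the points `p + l • (z - p)` of the segment towards `z` and letting
`l → 0`. For the Chambolle–Pock primal step from `x_{k+1}` to `x_{k+2}`, tested at `z = x_{k+1}`,
it bounds `f(x_{k+2}) - f(x_{k+1})`; the remaining part of `F_{k+1} - F_k` is linear in the iterates.
-/

open Set in
lemma le_of_forall_mem_Ioc_le_add_mul_s7 {A B C : ℝ} (h : ∀ l ∈ Ioc (0 : ℝ) 1, A ≤ B + l * C) :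
    A ≤ B := by
  have hlim : Tendsto (fun l : ℝ => B + l * C) (𝓝[>] 0) (𝓝 B) := by
    have hcont : Continuous fun l : ℝ => B + l * C := by fun_prop
    exact (hcont.tendsto' 0 B (by simp)).mono_left nhdsWithin_le_nhds
  exact ge_of_tendsto hlim (eventually_of_mem (Ioc_mem_nhdsGT one_pos) h)

lemma EProper.exists_eq_coe {E : Type*} {f : E → EReal} (hf : EProper f) {x : E}
    (hx : f x ≠ ⊤) : ∃ a : ℝ, f x = a :=
  ⟨_, (EReal.coe_toReal hx (hf.2 x)).symm⟩

section Prox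

variable {E : Type*} [NormedAddCommGroup E] [InnerProductSpace ℝ E] {f : E → EReal}

lemma EProper.ne_top_of_mem_ESubdiff (hf : EProper f) {x u : E} (hu : u ∈ ESubdiff f x) :
    f x ≠ ⊤ := by
  obtain ⟨⟨z, hz⟩, -⟩ := hf
  intro htop
  have h := hu z
  rw [htop, EReal.top_add_coe, top_le_iff] at h
  exact hz h

variable {τ : ℝ} {x p : E}

lemma IsProx.ne_top (hp : IsProx τ f x p) (hf : EProper f) : f p ≠ ⊤ := by
  obtain ⟨⟨z, hz⟩, -⟩ := hf
  intro htop
  have h := hp z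
  rw [htop, EReal.top_add_coe] at h
  exact (EReal.add_lt_top hz (EReal.coe_ne_top _)).not_ge h

open Set in
lemma IsProx.inner_le_of_mem_Ioc (hτ : 0 < τ) (hconv : EConvex f) (hp : IsProx τ f x p)
    {z : E} {a b : ℝ} (ha : f p = a) (hb : f z = b) {l : ℝ} (hl : l ∈ Ioc (0 : ℝ) 1) :
    a + ⟪(1 / τ) • (x - p), z - p⟫ ≤ b + l * (1 / (2 * τ) * ‖z - p‖ ^ 2) := by
  obtain ⟨hl0, hl1⟩ := hl
  set c := 1 / (2 * τ) with hc
  have hseg : f (p + l • (z - p)) ≤ (((1 - l) * a + l * b : ℝ) : EReal) := by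
    have h := hconv p z (1 - l) l (by linarith) hl0.le (by ring)
    rw [ha, hb] at h
    rw [show p + l • (z - p) = (1 - l) • p + l • z by module]
    exact_mod_cast h
  have hprox : a + c * ‖p - x‖ ^ 2 ≤ (1 - l) * a + l * b + c * ‖p + l • (z - p) - x‖ ^ 2 := by
    have h := (hp (p + l • (z - p))).trans (add_le_add_left hseg _)
    rw [ha] at h
    exact_mod_cast h
  have hexp : ‖p + l • (z - p) - x‖ ^ 2
      = ‖p - x‖ ^ 2 - 2 * l * ⟪x - p, z - p⟫ + l ^ 2 * ‖z - p‖ ^ 2 := by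
    rw [show p + l • (z - p) - x = (p - x) + l • (z - p) by abel, norm_add_sq_real,
      real_inner_smul_right, norm_smul, mul_pow, Real.norm_eq_abs, sq_abs, ← neg_sub x p,
      inner_neg_left]
    ring
  rw [hexp] at hprox
  have hscaled : l * (a + 2 * c * ⟪x - p, z - p⟫) ≤ l * (b + l * (c * ‖z - p‖ ^ 2)) := by
    linarith
  rw [real_inner_smul_left, show 1 / τ = 2 * c by rw [hc]; field_simp]
  linarith [le_of_mul_le_mul_left hscaled hl0]

lemma IsProx.mem_ESubdiff (hτ : 0 < τ) (hconv : EConvex f) (hf : EProper f)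
    (hp : IsProx τ f x p) : (1 / τ) • (x - p) ∈ ESubdiff f p := by
  intro z
  obtain ⟨a, ha⟩ := hf.exists_eq_coe (hp.ne_top hf)
  rcases eq_or_ne (f z) ⊤ with hz | hz
  · simp [hz]
  obtain ⟨b, hb⟩ := hf.exists_eq_coe hz
  rw [ha, hb]
  exact_mod_cast le_of_forall_mem_Ioc_le_add_mul_s7 fun l hl ↦
    hp.inner_le_of_mem_Ioc hτ hconv ha hb hl

end Prox

lemma IsProx.le_of_forwardBackward_step {E F : Type*}
    [NormedAddCommGroup E] [InnerProductSpace ℝ E] [CompleteSpace E]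
    [NormedAddCommGroup F] [InnerProductSpace ℝ F] [CompleteSpace F]
    {f : E → EReal} {τ : ℝ} (hτ : 0 < τ) (hconv : EConvex f) (hf : EProper f)
    {L : E →L[ℝ] F} {x p : E} {y : F}
    (hp : IsProx τ f (x - τ • (ContinuousLinearMap.adjoint L) y) p) :
    f p + ((1 / τ * ‖p - x‖ ^ 2 + ⟪y, L p - L x⟫ : ℝ) : EReal) ≤ f x := by
  have h := hp.mem_ESubdiff hτ hconv hf x
  have hinner : ⟪(1 / τ) • (x - τ • (ContinuousLinearMap.adjoint L) y - p), x - p⟫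
      = 1 / τ * ‖p - x‖ ^ 2 + ⟪y, L p - L x⟫ := by
    rw [show x - τ • (ContinuousLinearMap.adjoint L) y - p
        = (x - p) - τ • (ContinuousLinearMap.adjoint L) y by abel,
      real_inner_smul_left, inner_sub_left, real_inner_smul_left,
      ContinuousLinearMap.adjoint_inner_left, real_inner_self_eq_norm_sq, norm_sub_rev,
      map_sub, inner_sub_right, inner_sub_right]
    field_simp
    ring
  rwa [hinner] at h

theorem Fk_succ_sub_Fk_bound_general
    {𝓗 𝓖 : Type*}
    [NormedAddCommGroup 𝓗] [InnerProductSpace ℝ 𝓗] [CompleteSpace 𝓗]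
    [NormedAddCommGroup 𝓖] [InnerProductSpace ℝ 𝓖] [CompleteSpace 𝓖]
    (f : 𝓗 → EReal)
    (hf₁ : EProper f) (hf₂ : EConvex f)
    (L : 𝓗 →L[ℝ] 𝓖)
    (τ : ℝ) (hτ : 0 < τ)
    (xstar : 𝓗) (ystar : 𝓖)
    (hkkt₁ : -((ContinuousLinearMap.adjoint L) ystar) ∈ ESubdiff f xstar)
    (x : ℕ → 𝓗) (y : ℕ → 𝓖)
    (hx : ∀ k : ℕ, IsProx τ f (x k - τ • (ContinuousLinearMap.adjoint L) (y k)) (x (k + 1)))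
    (F : ℕ → EReal)
    (hF : ∀ k : ℕ, F k = f (x (k + 1)) - f xstar
      + ((⟪(ContinuousLinearMap.adjoint L) ystar, x (k + 1) - xstar⟫ : ℝ) : EReal))
    :
    ∀ k : ℕ, F (k + 1) - F k ≤ ((-(1 / τ) * ‖x (k + 2) - x (k + 1)‖ ^ 2
      + ⟪ystar - y (k + 1), L (x (k + 2)) - L (x (k + 1))⟫ : ℝ) : EReal) := by
  intro k
  have hdescent := (hx (k + 1)).le_of_forwardBackward_step hτ hf₂ hf₁
  obtain ⟨s, hs⟩ := hf₁.exists_eq_coe (hf₁.ne_top_of_mem_ESubdiff hkkt₁)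
  obtain ⟨a, ha⟩ := hf₁.exists_eq_coe ((hx k).ne_top hf₁)
  obtain ⟨b, hb⟩ := hf₁.exists_eq_coe ((hx (k + 1)).ne_top hf₁)
  rw [ha, hb] at hdescent
  rw [hF, hF, hs, ha, hb]
  norm_cast at hdescent ⊢
  simp only [inner_sub_left, inner_sub_right,
    ContinuousLinearMap.adjoint_inner_left] at hdescent ⊢
  linarith

theorem Fk_succ_sub_Fk_bound
    {𝓗 𝓖 : Type*}
    [NormedAddCommGroup 𝓗] [InnerProductSpace ℝ 𝓗] [CompleteSpace 𝓗]
    [NormedAddCommGroup 𝓖] [InnerProductSpace ℝ 𝓖] [CompleteSpace 𝓖]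
    (f : 𝓗 → EReal) (g : 𝓖 → EReal) (gs : 𝓖 → EReal)
    (hf₁ : EProper f) (hf₂ : EConvex f) (hf₃ : LowerSemicontinuous f)
    (hg₁ : EProper g) (hg₂ : EConvex g) (hg₃ : LowerSemicontinuous g)
    (hgs : gs = EConj g)
    (L : 𝓗 →L[ℝ] 𝓖) (hL : L ≠ 0)
    (τ σ θ : ℝ) (hτ : 0 < τ) (hσ : 0 < σ)
    (θ : ℝ)
    (xstar : 𝓗) (ystar : 𝓖)
    (hkkt₁ : -((ContinuousLinearMap.adjoint L) ystar) ∈ ESubdiff f xstar)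
    (hkkt₂ : L xstar ∈ ESubdiff gs ystar)
    (x : ℕ → 𝓗) (y : ℕ → 𝓖)
    (hx : ∀ k : ℕ, IsProx τ f (x k - τ • (ContinuousLinearMap.adjoint L) (y k)) (x (k + 1)))
    (hy : ∀ k : ℕ,
      IsProx σ gs (y k + σ • L (x (k + 1) + θ • (x (k + 1) - x k))) (y (k + 1)))
    (F : ℕ → EReal)
    (hF : ∀ k : ℕ, F k = f (x (k + 1)) - f xstar
      + ((⟪(ContinuousLinearMap.adjoint L) ystar, x (k + 1) - xstar⟫ : ℝ) : EReal))
    :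
    ∀ k : ℕ, F (k + 1) - F k ≤ ((-(1 / τ) * ‖x (k + 2) - x (k + 1)‖ ^ 2
      + ⟪ystar - y (k + 1), L (x (k + 2)) - L (x (k + 1))⟫ : ℝ) : EReal) :=
  Fk_succ_sub_Fk_bound_general f hf₁ hf₂ L τ hτ xstar ystar hkkt₁ x y hx F hF
end
end

section
/- Let (x_k), (y_k) be generated by the Chambolle–Pock iteration x_{k+1} = prox_{τf}(x_k − τ L* y_k), y_{k+1} = prox_{σ g*}(y_k + σ L(x_{k+1} + θ(x_{k+1} − x_k))), with θ ≥ 1/2 and τ, σ > 0 satisfying τσ‖L‖² ≤ 4/(1 + 2θ), at least one of these two inequalities being strict, and let (x⋆, y⋆) be a KKT point (−L*y⋆ ∈ ∂f(x⋆), Lx⋆ ∈ ∂g*(y⋆)). Define F_k = f(x_{k+1}) − f(x⋆) + ⟨L*y⋆, x_{k+1} − x⋆⟩ and V_k = θF_k + (1/2τ)‖x_{k+1} − x⋆‖² + (1/2σ)‖y_k − y⋆ + σθ(Lx_{k+1} − Lx_k)‖² + (θ/2τ)‖x_{k+1} − x_k‖² − (σ(4θ²+1)/16)‖Lx_{k+1}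 − Lx_k‖². Then V_k ≥ 0 for every nonnegative integer k. -/
open scoped RealInnerProductSpace
open Filter Topology

noncomputable section

theorem Vk_nonneg
    {𝓗 𝓖 : Type*}
    [NormedAddCommGroup 𝓗] [InnerProductSpace ℝ 𝓗] [CompleteSpace 𝓗]
    [NormedAddCommGroup 𝓖] [InnerProductSpace ℝ 𝓖] [CompleteSpace 𝓖]
    (f : 𝓗 → EReal) (g : 𝓖 → EReal) (gs : 𝓖 → EReal)
    (hf₁ : EProper f) (hf₂ : EConvex f) (hf₃ : LowerSemicontinuous f)
    (hg₁ : EProper g) (hg₂ : EConvex g) (hg₃ : LowerSemicontinuous g)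
    (hgs : gs = EConj g)
    (L : 𝓗 →L[ℝ] 𝓖) (hL : L ≠ 0)
    (τ σ θ : ℝ) (hτ : 0 < τ) (hσ : 0 < σ)
    (hθ : 1 / 2 ≤ θ) (hstep : τ * σ * ‖L‖ ^ 2 ≤ 4 / (1 + 2 * θ))
    (hstrict : 1 / 2 < θ ∨ τ * σ * ‖L‖ ^ 2 < 4 / (1 + 2 * θ))
    (xstar : 𝓗) (ystar : 𝓖)
    (hkkt₁ : -((ContinuousLinearMap.adjoint L) ystar) ∈ ESubdiff f xstar)
    (hkkt₂ : L xstar ∈ ESubdiff gs ystar)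
    (x : ℕ → 𝓗) (y : ℕ → 𝓖)
    (hx : ∀ k : ℕ, IsProx τ f (x k - τ • (ContinuousLinearMap.adjoint L) (y k)) (x (k + 1)))
    (hy : ∀ k : ℕ,
      IsProx σ gs (y k + σ • L (x (k + 1) + θ • (x (k + 1) - x k))) (y (k + 1)))
    (F : ℕ → EReal)
    (hF : ∀ k : ℕ, F k = f (x (k + 1)) - f xstar
      + ((⟪(ContinuousLinearMap.adjoint L) ystar, x (k + 1) - xstar⟫ : ℝ) : EReal))
    (V : ℕ → EReal)
    (hV : ∀ k : ℕ, V k = (θ : EReal) * F k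
      + ((1 / (2 * τ) * ‖x (k + 1) - xstar‖ ^ 2
        + 1 / (2 * σ) * ‖y k - ystar + (σ * θ) • (L (x (k + 1)) - L (x k))‖ ^ 2
        + θ / (2 * τ) * ‖x (k + 1) - x k‖ ^ 2
        - σ * (4 * θ ^ 2 + 1) / 16 * ‖L (x (k + 1)) - L (x k)‖ ^ 2 : ℝ) : EReal))
    :
    ∀ k : ℕ, 0 ≤ V k := by

  intro k
  rw [hV k]
  -- f xstar is finite
  obtain ⟨⟨z₀, hz₀⟩, hbot⟩ := hf₁
  have hxstar_top : f xstar ≠ ⊤ := by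
    intro h
    have := hkkt₁ z₀
    rw [h] at this
    exact hz₀ (top_le_iff.mp (le_trans (by simp [EReal.top_add_of_ne_bot]) this))
  have hxstar_bot : f xstar ≠ ⊥ := hbot xstar
  set r : ℝ := (f xstar).toReal with hr
  have hfr : f xstar = (r : EReal) := (EReal.coe_toReal hxstar_top hxstar_bot).symm
  -- F k is nonneg
  have hFk : 0 ≤ F k := by
    rw [hF k]
    set c : ℝ := ⟪(ContinuousLinearMap.adjoint L) ystar, x (k + 1) - xstar⟫ with hc
    have hkey := hkkt₁ (x (k + 1))
    rw [hfr] at hkey ⊢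
    have hinner : (⟪-(ContinuousLinearMap.adjoint L) ystar, x (k + 1) - xstar⟫ : ℝ) = -c := by
      rw [inner_neg_left]
    rw [hinner] at hkey
    by_cases htop : f (x (k + 1)) = ⊤
    · rw [htop]
      rw [show (⊤ : EReal) - (r : EReal) = ⊤ from EReal.top_sub_coe r]
      simp [EReal.top_add_of_ne_bot]
    · have hbot' : f (x (k + 1)) ≠ ⊥ := hbot (x (k + 1))
      set s : ℝ := (f (x (k + 1))).toReal with hs
      have hfs : f (x (k + 1)) = (s : EReal) := (EReal.coe_toReal htop hbot').symm
      rw [hfs] at hkey ⊢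
      have hle : r + (-c) ≤ s := by
        have : ((r + (-c) : ℝ) : EReal) ≤ (s : EReal) := by
          rw [EReal.coe_add]; exact hkey
        exact_mod_cast this
      have : ((s - r + c : ℝ) : EReal) = (s : EReal) - (r : EReal) + (c : EReal) := by
        rw [EReal.coe_add, EReal.coe_sub]
      rw [← this]
      exact_mod_cast (by linarith : (0 : ℝ) ≤ s - r + c)
  have hθpos : (0 : ℝ) ≤ θ := by linarith
  have hterm1 : (0 : EReal) ≤ (θ : EReal) * F k :=
    mul_nonneg (by exact_mod_cast hθpos) hFk
  -- real quadratic part is nonneg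
  have hreal : (0 : ℝ) ≤ 1 / (2 * τ) * ‖x (k + 1) - xstar‖ ^ 2
      + 1 / (2 * σ) * ‖y k - ystar + (σ * θ) • (L (x (k + 1)) - L (x k))‖ ^ 2
      + θ / (2 * τ) * ‖x (k + 1) - x k‖ ^ 2
      - σ * (4 * θ ^ 2 + 1) / 16 * ‖L (x (k + 1)) - L (x k)‖ ^ 2 := by
    set A := ‖x (k + 1) - xstar‖ ^ 2 with hA
    set B := ‖y k - ystar + (σ * θ) • (L (x (k + 1)) - L (x k))‖ ^ 2 with hB
    have hApos : 0 ≤ A := sq_nonneg _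
    have hBpos : 0 ≤ B := sq_nonneg _
    have hc2 : 0 ≤ ‖x (k + 1) - x k‖ ^ 2 := sq_nonneg _
    have hLd : ‖L (x (k + 1)) - L (x k)‖ ≤ ‖L‖ * ‖x (k + 1) - x k‖ := by
      have := L.le_opNorm (x (k + 1) - x k)
      rwa [map_sub] at this
    have hLd2 : ‖L (x (k + 1)) - L (x k)‖ ^ 2 ≤ ‖L‖ ^ 2 * ‖x (k + 1) - x k‖ ^ 2 := by
      have h1 : 0 ≤ ‖L (x (k + 1)) - L (x k)‖ := norm_nonneg _
      nlinarith [norm_nonneg (L (x (k + 1)) - L (x k)), norm_nonneg (x (k + 1) - x k),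
        norm_nonneg L]
    have hden1 : (0 : ℝ) < 1 + 2 * θ := by linarith
    have hden2 : (0 : ℝ) < 4 * θ ^ 2 + 1 := by positivity
    have hchain : 4 / (1 + 2 * θ) ≤ 8 * θ / (4 * θ ^ 2 + 1) := by
      rw [div_le_div_iff₀ hden1 hden2]
      nlinarith
    have hstep2 : τ * σ * ‖L‖ ^ 2 ≤ 8 * θ / (4 * θ ^ 2 + 1) := le_trans hstep hchain
    have hstep3 : τ * σ * ‖L‖ ^ 2 * (4 * θ ^ 2 + 1) ≤ 8 * θ := by
      rw [← le_div_iff₀ hden2]; exact hstep2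
    have hkey2 : σ * (4 * θ ^ 2 + 1) / 16 * ‖L (x (k + 1)) - L (x k)‖ ^ 2
        ≤ θ / (2 * τ) * ‖x (k + 1) - x k‖ ^ 2 := by
      have h1 : σ * (4 * θ ^ 2 + 1) / 16 * ‖L (x (k + 1)) - L (x k)‖ ^ 2
          ≤ σ * (4 * θ ^ 2 + 1) / 16 * (‖L‖ ^ 2 * ‖x (k + 1) - x k‖ ^ 2) := by
        apply mul_le_mul_of_nonneg_left hLd2
        positivity
      refine le_trans h1 ?_
      rw [div_mul_eq_mul_div, div_mul_eq_mul_div, div_le_div_iff₀ (by norm_num) (by linarith)]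
      nlinarith [mul_nonneg (mul_nonneg hσ.le hc2) (sq_nonneg ‖L‖)]
    have hApos' : 0 ≤ 1 / (2 * τ) * A := by positivity
    have hBpos' : 0 ≤ 1 / (2 * σ) * B := by positivity
    linarith
  exact add_nonneg hterm1 (by exact_mod_cast hreal)
end
end

section
/- Let (x_k), (y_k) be generated by the Chambolle–Pock iteration x_{k+1} = prox_{τf}(x_k − τ L* y_k), y_{k+1} = prox_{σ g*}(y_k + σ L(x_{k+1} + θ(x_{k+1} − x_k))), with θ ≥ 1/2 and τ, σ > 0 satisfying τσ‖L‖² ≤ 4/(1 + 2θ), at least one of these two inequalities being strict, and let (x⋆, y⋆) be a KKT point (−L*y⋆ ∈ ∂f(x⋆), Lx⋆ ∈ ∂g*(y⋆)). Define F_k = f(x_{k+1}) − f(x⋆) + ⟨L*y⋆, x_{k+1} − x⋆⟩, G_k = g*(y_{k+1}) − g*(y⋆) − ⟨Lx⋆, y_{k+1} − y⋆⟩, and V_k = θF_k + (1/2τ)‖x_{k+1} − x⋆‖² + (1/2σ)‖y_k − y⋆ + σθ(Lx_{k+1} − Lx_k)‖² + (θ/2τ)‖x_{k+1} − x_k‖²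 − (σ(4θ²+1)/16)‖Lx_{k+1} − Lx_k‖². Then for every positive integer K, 0 ≤ ∑_{k=0}^{K−1} (F_k + G_k) ≤ V₀; in particular, the series ∑_{k=0}^{∞} (F_k + G_k) converges and is bounded by V₀. -/
open scoped RealInnerProductSpace
open Filter Topology

noncomputable section

/-!
Each prox step is a subgradient inequality: `x_{k+1} = prox_{τf}(w)` means
`(w - x_{k+1}) / τ ∈ ∂f(x_{k+1})`. After tilting `f` and `g*` by the KKT multipliers, `F_k` and
`G_k` become Bregman distances of `f` and `g*` from the saddle point, so they are nonnegative and
the tilted prox steps are subgradient inequalities relative to `(x⋆, y⋆)`. A fixed nonnegative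
combination of these inequalities, one Young inequality and the step-size condition applied to
`L (d_k ∓ d_{k+1})` (with `d_k = x_{k+1} - x_k`) gives `F_k + G_k + V_{k+1} ≤ V_k`, and the
step-size condition also gives `V_k ≥ 0`; summing telescopes to the bound.
The dual step needs `g*` proper and convex; it is not identically `⊤` because the lower
semicontinuous convex `g` has an affine minorant, by Hahn–Banach separation from its epigraph.
-/

section

variable {E : Type*} [NormedAddCommGroup E] [InnerProductSpace ℝ E]

lemma ne_top_of_mem_eSubdiff {h : E → EReal} {u p z : E} (hu : u ∈ ESubdiff h p) (hz : h z ≠ ⊤) :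
    h p ≠ ⊤ := by
  intro hp
  have := hu z
  rw [hp, EReal.top_add_coe, top_le_iff] at this
  exact hz this

lemma toReal_add_inner_le_of_mem_eSubdiff {h : E → EReal} (hbot : ∀ x, h x ≠ ⊥) {u p z : E}
    (hu : u ∈ ESubdiff h p) (hz : h z ≠ ⊤) : (h p).toReal + ⟪u, z - p⟫ ≤ (h z).toReal := by
  have := hu z
  rw [← EReal.coe_toReal (ne_top_of_mem_eSubdiff hu hz) (hbot p),
    ← EReal.coe_toReal hz (hbot z)] at this
  exact_mod_cast this

lemma IsProx.ne_top_s13 {τ : ℝ} {h : E → EReal} {w p z : E} (hp : IsProx τ h w p) (hz : h z ≠ ⊤) :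
    h p ≠ ⊤ := by
  intro htop
  have := hp z
  rw [htop, EReal.top_add_coe, top_le_iff] at this
  exact EReal.add_ne_top hz (EReal.coe_ne_top _) this

lemma le_of_forall_le_add_mul {a b c : ℝ} (h : ∀ t ∈ Set.Ioc (0 : ℝ) 1, a ≤ b + t * c) : a ≤ b := by
  have hlim : Filter.Tendsto (fun t => b + t * c) (𝓝[>] 0) (𝓝 b) := by
    apply tendsto_nhdsWithin_of_tendsto_nhds
    simpa using ((continuous_id.mul continuous_const).const_add b).tendsto (0 : ℝ)
  exact ge_of_tendsto hlim (Filter.mem_of_superset (Ioc_mem_nhdsGT one_pos) h)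

-- Test the minimality of `p` against the segment points `p + t • (z - p)` and let `t → 0`.
theorem IsProx.inv_smul_sub_mem_eSubdiff {τ : ℝ} {h : E → EReal} {w p : E}
    (hp : IsProx τ h w p) (hconv : EConvex h) (hbot : ∀ x, h x ≠ ⊥) :
    τ⁻¹ • (w - p) ∈ ESubdiff h p := by
  intro z
  by_cases hz : h z = ⊤
  · simp [hz]
  obtain ⟨a, ha⟩ : ∃ a : ℝ, h p = a := ⟨_, (EReal.coe_toReal (hp.ne_top_s13 hz) (hbot p)).symm⟩
  obtain ⟨b, hb⟩ : ∃ b : ℝ, h z = b := ⟨_, (EReal.coe_toReal hz (hbot z)).symm⟩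
  rw [ha, hb]
  norm_cast
  refine le_of_forall_le_add_mul (c := 1 / (2 * τ) * ‖z - p‖ ^ 2) fun t ⟨ht₀, ht₁⟩ => ?_
  have hseg : h ((1 - t) • p + t • z) ≤ ((1 - t) * a + t * b : ℝ) := by
    have := hconv p z (1 - t) t (by linarith) ht₀.le (by ring)
    rwa [ha, hb] at this
  have hmin := (hp ((1 - t) • p + t • z)).trans (add_le_add_left hseg _)
  rw [ha] at hmin
  norm_cast at hmin
  rw [show (1 - t) • p + t • z - w = (p - w) + t • (z - p) by module, norm_add_sq_real,
    real_inner_smul_right, norm_smul, mul_pow, Real.norm_eq_abs, sq_abs] at hmin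
  rw [real_inner_smul_left, ← neg_sub p w, inner_neg_left]
  refine le_of_mul_le_mul_left ?_ ht₀
  linear_combination hmin

lemma eConj_ne_bot {g : E → EReal} (hg : EProper g) (y : E) : EConj g y ≠ ⊥ := by
  obtain ⟨x, hx⟩ := hg.1
  refine ne_bot_of_le_ne_bot ?_ (le_iSup (fun x => ((⟪x, y⟫ : ℝ) : EReal) - g x) x)
  rw [← EReal.coe_toReal hx (hg.2 x)]
  exact EReal.coe_ne_bot _

lemma eConvex_eConj {g : E → EReal} (hg : ∀ x, g x ≠ ⊥) : EConvex (EConj g) := by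
  intro y₁ y₂ a b ha hb hab
  refine iSup_le fun x => ?_
  by_cases hx : g x = ⊤
  · simp [hx, EReal.sub_top]
  obtain ⟨r, hr⟩ : ∃ r : ℝ, g x = r := ⟨_, (EReal.coe_toReal hx (hg x)).symm⟩
  have hterm : ∀ y, ((⟪x, y⟫ - r : ℝ) : EReal) ≤ EConj g y := fun y => by
    rw [EReal.coe_sub, ← hr]
    exact le_iSup (fun x => ((⟪x, y⟫ : ℝ) : EReal) - g x) x
  calc ((⟪x, a • y₁ + b • y₂⟫ : ℝ) : EReal) - g x
      = ((a * (⟪x, y₁⟫ - r) + b * (⟪x, y₂⟫ - r) : ℝ) : EReal) := by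
        rw [hr, ← EReal.coe_sub, inner_add_right, real_inner_smul_right, real_inner_smul_right]
        congr 1
        linear_combination r * hab
    _ ≤ (a : EReal) * EConj g y₁ + (b : EReal) * EConj g y₂ := by
        rw [EReal.coe_add, EReal.coe_mul, EReal.coe_mul]
        gcongr
        exacts [hterm y₁, hterm y₂]

lemma EConvex.convex_epigraph {g : E → EReal} (hg : EConvex g) :
    Convex ℝ {q : E × ℝ | g q.1 ≤ q.2} := by
  rintro ⟨x₁, t₁⟩ h₁ ⟨x₂, t₂⟩ h₂ a b ha hb hab
  simp only [Set.mem_ofPred_eq, Prod.fst_add, Prod.smul_fst, Prod.snd_add, Prod.smul_snd,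
    smul_eq_mul] at h₁ h₂ ⊢
  calc g (a • x₁ + b • x₂) ≤ (a : EReal) * g x₁ + (b : EReal) * g x₂ := hg x₁ x₂ a b ha hb hab
    _ ≤ (a : EReal) * t₁ + (b : EReal) * t₂ := by gcongr
    _ = ((a * t₁ + b * t₂ : ℝ) : EReal) := by norm_cast

lemma exists_affine_minorant [CompleteSpace E] {g : E → EReal} (hg : EProper g) (hconv : EConvex g)
    (hlsc : LowerSemicontinuous g) : ∃ (w : E) (c : ℝ), ∀ x, ((⟪w, x⟫ + c : ℝ) : EReal) ≤ g x := by
  obtain ⟨x₀, hx₀⟩ := hg.1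
  obtain ⟨r, hr⟩ : ∃ r : ℝ, g x₀ = r := ⟨_, (EReal.coe_toReal hx₀ (hg.2 x₀)).symm⟩
  have hclosed : IsClosed {q : E × ℝ | g q.1 ≤ q.2} := hlsc.isClosed_epigraph.preimage
    (continuous_fst.prodMk (continuous_coe_real_ereal.comp continuous_snd))
  obtain ⟨φ, u, hφu, hu⟩ := geometric_hahn_banach_point_closed hconv.convex_epigraph hclosed
    (x := (x₀, r - 1))
    (show ¬ g x₀ ≤ ((r - 1 : ℝ) : EReal) by rw [hr, EReal.coe_le_coe_iff]; linarith)
  have hφ : ∀ x t, φ (x, t) = φ (x, 0) + t * φ (0, 1) := fun x t => by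
    rw [← smul_eq_mul, ← map_smul, ← map_add]; simp
  have hβ : 0 < φ (0, 1) := by
    have := hu (x₀, r) (by simp [hr])
    rw [hφ] at this hφu
    linarith
  set w₀ := (InnerProductSpace.toDual ℝ E).symm (φ.comp (ContinuousLinearMap.inl ℝ E ℝ))
  have hw₀ : ∀ x, ⟪w₀, x⟫ = φ (x, 0) := fun x => by simp [w₀, InnerProductSpace.toDual_symm_apply]
  refine ⟨-(φ (0, 1))⁻¹ • w₀, u / φ (0, 1), fun x => ?_⟩
  by_cases hx : g x = ⊤
  · simp [hx]
  obtain ⟨s, hs⟩ : ∃ s : ℝ, g x = s := ⟨_, (EReal.coe_toReal hx (hg.2 x)).symm⟩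
  have := hu (x, s) (by simp [hs])
  rw [hφ, ← hw₀] at this
  rw [hs, EReal.coe_le_coe_iff, real_inner_smul_left,
    show -(φ (0, 1))⁻¹ * ⟪w₀, x⟫ + u / φ (0, 1) = (u - ⟪w₀, x⟫) / φ (0, 1) by ring,
    div_le_iff₀ hβ]
  linarith

lemma exists_eConj_ne_top [CompleteSpace E] {g : E → EReal} (hg : EProper g) (hconv : EConvex g)
    (hlsc : LowerSemicontinuous g) : ∃ y, EConj g y ≠ ⊤ := by
  obtain ⟨w, c, hwc⟩ := exists_affine_minorant hg hconv hlsc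
  refine ⟨w, ne_top_of_le_ne_top (EReal.coe_ne_top (-c)) (iSup_le fun x => ?_)⟩
  by_cases hx : g x = ⊤
  · simp [hx]
  rw [← EReal.coe_toReal hx (hg.2 x), ← EReal.coe_sub, EReal.coe_le_coe_iff, real_inner_comm]
  have := hwc x
  rw [← EReal.coe_toReal hx (hg.2 x), EReal.coe_le_coe_iff] at this
  linarith

def bregman (φ : E → ℝ) (u x₀ x : E) : ℝ := φ x - φ x₀ - ⟪u, x - x₀⟫

lemma bregman_self (φ : E → ℝ) (u x₀ : E) : bregman φ u x₀ x₀ = 0 := by simp [bregman]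

lemma bregman_nonneg {φ : E → ℝ} {u x₀ x : E} (h : φ x₀ + ⟪u, x - x₀⟫ ≤ φ x) :
    0 ≤ bregman φ u x₀ x := by
  unfold bregman; linarith

lemma bregman_add_inner_le {φ : E → ℝ} {v p z : E} (h : φ p + ⟪v, z - p⟫ ≤ φ z) (u x₀ : E) :
    bregman φ u x₀ p + ⟪v - u, z - p⟫ ≤ bregman φ u x₀ z := by
  have : ⟪u, z - x₀⟫ = ⟪u, z - p⟫ + ⟪u, p - x₀⟫ := by rw [← inner_add_right, sub_add_sub_cancel]
  simp only [bregman, inner_sub_left]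
  linarith

lemma coe_bregman_toReal {h : E → EReal} (hbot : ∀ x, h x ≠ ⊥) {u x₀ x : E} (hx : h x ≠ ⊤)
    (hx₀ : h x₀ ≠ ⊤) :
    (bregman (fun z => (h z).toReal) u x₀ x : EReal)
      = h x - h x₀ - ((⟪u, x - x₀⟫ : ℝ) : EReal) := by
  simp only [bregman, EReal.coe_sub, EReal.coe_toReal hx (hbot x), EReal.coe_toReal hx₀ (hbot x₀)]

lemma neg_real_inner_le_young {σ : ℝ} (hσ : 0 < σ) (v w : E) :
    -⟪v, w⟫ ≤ 1 / (2 * σ) * ‖v‖ ^ 2 + σ / 2 * ‖w‖ ^ 2 := by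
  have key : 1 / (2 * σ) * ‖v‖ ^ 2 + σ / 2 * ‖w‖ ^ 2 - -⟪v, w⟫ = 1 / (2 * σ) * ‖v + σ • w‖ ^ 2 := by
    rw [norm_add_sq_real, real_inner_smul_right, norm_smul, mul_pow, Real.norm_eq_abs, sq_abs]
    field_simp
    ring
  rw [← sub_nonneg, key]
  positivity

end

lemma EReal.coe_finset_sum {ι : Type*} (s : Finset ι) (f : ι → ℝ) :
    ((∑ i ∈ s, f i : ℝ) : EReal) = ∑ i ∈ s, (f i : EReal) :=
  map_sum (⟨⟨Real.toEReal, EReal.coe_zero⟩, EReal.coe_add⟩ : ℝ →+ EReal) f s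

lemma sum_range_le_of_add_le {a V : ℕ → ℝ} (h : ∀ k, a k + V (k + 1) ≤ V k) (hV : ∀ k, 0 ≤ V k)
    (K : ℕ) : ∑ k ∈ Finset.range K, a k ≤ V 0 :=
  calc ∑ k ∈ Finset.range K, a k ≤ ∑ k ∈ Finset.range K, (V k - V (k + 1)) :=
        Finset.sum_le_sum fun k _ => by linarith [h k]
    _ = V 0 - V K := Finset.sum_range_sub' V K
    _ ≤ V 0 := by linarith [hV K]

section

open scoped InnerProduct

variable {𝓗 𝓖 : Type*} [NormedAddCommGroup 𝓗] [InnerProductSpace ℝ 𝓗]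
  [NormedAddCommGroup 𝓖] [InnerProductSpace ℝ 𝓖] (L : 𝓗 →L[ℝ] 𝓖) (τ σ θ : ℝ)

-- `V_k = cpEnergy L τ σ θ F_k (x_{k+1} - x⋆) (x_{k+1} - x_k) (y_k - y⋆)`.
def cpEnergy (a : ℝ) (p d : 𝓗) (v : 𝓖) : ℝ :=
  θ * a + 1 / (2 * τ) * ‖p‖ ^ 2 + 1 / (2 * σ) * ‖v + (σ * θ) • L d‖ ^ 2
    + θ / (2 * τ) * ‖d‖ ^ 2 - σ * (4 * θ ^ 2 + 1) / 16 * ‖L d‖ ^ 2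

variable {L τ σ θ}

lemma cpEnergy_eq (hσ : σ ≠ 0) (a : ℝ) (p d : 𝓗) (v : 𝓖) :
    cpEnergy L τ σ θ a p d v = θ * a + 1 / (2 * τ) * ‖p‖ ^ 2 + 1 / (2 * σ) * ‖v‖ ^ 2
      + θ * ⟪v, L d⟫ + θ / (2 * τ) * ‖d‖ ^ 2 + σ * (4 * θ ^ 2 - 1) / 16 * ‖L d‖ ^ 2 := by
  rw [cpEnergy, norm_add_sq_real, real_inner_smul_right, norm_smul, mul_pow, Real.norm_eq_abs,
    sq_abs]
  field_simp
  ring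

lemma sq_norm_map_le (v : 𝓗) : ‖L v‖ ^ 2 ≤ ‖L‖ ^ 2 * ‖v‖ ^ 2 := by
  rw [← mul_pow]; gcongr; exact L.le_opNorm v

lemma mul_sq_norm_map_le {c : ℝ} (hσ : 0 < σ) (hc : 0 ≤ c) (hstep : σ * c * ‖L‖ ^ 2 ≤ 4 / τ)
    (e : 𝓗) : σ * c * ‖L e‖ ^ 2 ≤ 4 / τ * ‖e‖ ^ 2 :=
  calc σ * c * ‖L e‖ ^ 2 ≤ σ * c * (‖L‖ ^ 2 * ‖e‖ ^ 2) := by gcongr; exact sq_norm_map_le e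
    _ ≤ 4 / τ * ‖e‖ ^ 2 := by rw [← mul_assoc]; gcongr

lemma cpEnergy_nonneg (hτ : 0 < τ) (hσ : 0 < σ) (hθ : 1 / 2 ≤ θ)
    (hstep : σ * (2 * θ + 1) * ‖L‖ ^ 2 ≤ 4 / τ) {a : ℝ} (ha : 0 ≤ a) (p d : 𝓗) (v : 𝓖) :
    0 ≤ cpEnergy L τ σ θ a p d v := by
  have hL := mul_sq_norm_map_le hσ (by linarith) hstep d
  have key : σ * (4 * θ ^ 2 + 1) / 16 * ‖L d‖ ^ 2 ≤ θ / (2 * τ) * ‖d‖ ^ 2 :=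
    calc σ * (4 * θ ^ 2 + 1) / 16 * ‖L d‖ ^ 2
        ≤ 2 * θ / 16 * (σ * (2 * θ + 1) * ‖L d‖ ^ 2) := by
          rw [← sub_nonneg]
          have : 0 ≤ σ * (2 * θ - 1) / 16 * ‖L d‖ ^ 2 := by
            have : 0 ≤ 2 * θ - 1 := by linarith
            positivity
          linarith
      _ ≤ 2 * θ / 16 * (4 / τ * ‖d‖ ^ 2) := by gcongr
      _ = θ / (2 * τ) * ‖d‖ ^ 2 := by field_simp; ring
  have : 0 ≤ θ * a := mul_nonneg (by linarith) ha
  have : 0 ≤ 1 / (2 * τ) * ‖p‖ ^ 2 := by positivity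
  have : 0 ≤ 1 / (2 * σ) * ‖v + (σ * θ) • L d‖ ^ 2 := by positivity
  unfold cpEnergy
  linarith

/- Here `d₀, d₁` are consecutive primal increments, `p` and `v₀, v₁` the distances to the
saddle point; the weights are `1/2, θ - 1/2, 1, 1` on `h₀, h₁, h₂, h₃`, and the step-size condition
is used on `d₀ - d₁` with weight `(2θ + 1)/32` and on `d₀ + d₁` with weight `(2θ - 1)/32`. -/
lemma cpEnergy_descent [CompleteSpace 𝓗] [CompleteSpace 𝓖] (hσ : 0 < σ) (hθ : 1 / 2 ≤ θ)
    (hstep : σ * (2 * θ + 1) * ‖L‖ ^ 2 ≤ 4 / τ)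
    {a₀ a₁ b : ℝ} {p d₀ d₁ : 𝓗} {v₀ v₁ : 𝓖}
    (h₀ : a₀ + ⟪-(τ⁻¹ • d₀ + (L†) v₀), d₁⟫ ≤ a₁)
    (h₁ : a₁ + ⟪-(τ⁻¹ • d₁ + (L†) v₁), -d₁⟫ ≤ a₀)
    (h₂ : a₁ + ⟪-(τ⁻¹ • d₁ + (L†) v₁), -(p + d₁)⟫ ≤ 0)
    (h₃ : b + ⟪σ⁻¹ • (v₀ - v₁) + L (p + θ • d₀), -v₁⟫ ≤ 0) :
    a₀ + b + cpEnergy L τ σ θ a₁ (p + d₁) d₁ v₁ ≤ cpEnergy L τ σ θ a₀ p d₀ v₀ := by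
  have young := neg_real_inner_le_young hσ (v₀ - v₁) (θ • L d₀ - (1 / 2 : ℝ) • L d₁)
  have hθ' : 0 ≤ 2 * θ - 1 := by linarith
  have hsub := mul_le_mul_of_nonneg_left (mul_sq_norm_map_le hσ (by linarith) hstep (d₀ - d₁))
    (by linarith : 0 ≤ 2 * θ + 1)
  have hadd := mul_le_mul_of_nonneg_left
    (mul_sq_norm_map_le hσ hθ' (le_trans (by gcongr; linarith) hstep) (d₀ + d₁)) hθ'
  have h₁' := mul_le_mul_of_nonneg_left h₁ hθ'
  rw [cpEnergy_eq hσ.ne', cpEnergy_eq hσ.ne']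
  simp only [map_add, map_sub, map_smul, norm_add_sq_real, norm_sub_sq_real, norm_smul,
    inner_neg_left, inner_neg_right, inner_add_left, inner_add_right, inner_sub_left,
    inner_sub_right, real_inner_smul_left, real_inner_smul_right,
    ContinuousLinearMap.adjoint_inner_left, real_inner_self_eq_norm_sq, Real.norm_eq_abs, mul_pow,
    sq_abs] at h₀ h₁' h₂ h₃ young hsub hadd ⊢
  rw [real_inner_comm p d₁] at h₂
  rw [real_inner_comm v₁ (L p), real_inner_comm v₁ (L d₀)] at h₃
  linear_combination (1 / 2) * h₁' + h₂ + h₃ + (1 / 2) * h₀ + young + (1 / 32) * hsub +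
    (1 / 32) * hadd

lemma cpEnergy_step [CompleteSpace 𝓗] [CompleteSpace 𝓖] (hτ : 0 < τ) (hσ : 0 < σ)
    (hθ : 1 / 2 ≤ θ) (hstep : σ * (2 * θ + 1) * ‖L‖ ^ 2 ≤ 4 / τ)
    {Φ : 𝓗 → ℝ} {Ψ : 𝓖 → ℝ} {xs x₀ x₁ x₂ : 𝓗} {ys y₀ y₁ : 𝓖} (hΦ : Φ xs = 0) (hΨ : Ψ ys = 0)
    (H₀ : Φ x₁ + ⟪τ⁻¹ • (x₀ - τ • (L†) y₀ - x₁) + (L†) ys, x₂ - x₁⟫ ≤ Φ x₂)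
    (H₁ : ∀ z ∈ ({x₁, xs} : Set 𝓗), Φ x₂ + ⟪τ⁻¹ • (x₁ - τ • (L†) y₁ - x₂) + (L†) ys, z - x₂⟫ ≤ Φ z)
    (H₂ : Ψ y₁ + ⟪σ⁻¹ • (y₀ + σ • L (x₁ + θ • (x₁ - x₀)) - y₁) - L xs, ys - y₁⟫ ≤ Ψ ys) :
    Φ x₁ + Ψ y₁ + cpEnergy L τ σ θ (Φ x₂) (x₂ - xs) (x₂ - x₁) (y₁ - ys)
      ≤ cpEnergy L τ σ θ (Φ x₁) (x₁ - xs) (x₁ - x₀) (y₀ - ys) := by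
  have hprimal : ∀ (u v : 𝓗) (w : 𝓖),
      τ⁻¹ • (u - τ • (L†) w - v) + (L†) ys = -(τ⁻¹ • (v - u) + (L†) (w - ys)) := by
    intro u v w
    rw [smul_sub, smul_sub, smul_smul, inv_mul_cancel₀ hτ.ne', one_smul, map_sub]
    module
  have hdual : σ⁻¹ • (y₀ + σ • L (x₁ + θ • (x₁ - x₀)) - y₁) - L xs
      = σ⁻¹ • ((y₀ - ys) - (y₁ - ys)) + L ((x₁ - xs) + θ • (x₁ - x₀)) := by
    rw [smul_sub, smul_add, smul_smul, inv_mul_cancel₀ hσ.ne', one_smul, sub_sub_sub_cancel_right,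
      map_add, map_add, map_sub]
    module
  have H₁₁ := H₁ x₁ (by simp)
  have H₁s := H₁ xs (by simp)
  rw [hprimal] at H₀ H₁₁ H₁s
  rw [← neg_sub x₂ x₁] at H₁₁
  rw [show xs - x₂ = -((x₁ - xs) + (x₂ - x₁)) by abel, hΦ] at H₁s
  rw [hdual, ← neg_sub y₁ ys, hΨ] at H₂
  rw [show x₂ - xs = (x₁ - xs) + (x₂ - x₁) by abel]
  exact cpEnergy_descent hσ hθ hstep H₀ H₁₁ H₁s H₂

lemma sum_le_cpEnergy [CompleteSpace 𝓗] [CompleteSpace 𝓖] (hτ : 0 < τ) (hσ : 0 < σ)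
    (hθ : 1 / 2 ≤ θ) (hstep : σ * (2 * θ + 1) * ‖L‖ ^ 2 ≤ 4 / τ)
    {Φ : 𝓗 → ℝ} {Ψ : 𝓖 → ℝ} {D : Set 𝓗} {xs : 𝓗} {ys : 𝓖} {x : ℕ → 𝓗} {y : ℕ → 𝓖}
    (hΦ : Φ xs = 0) (hΨ : Ψ ys = 0) (hxs : xs ∈ D) (hxD : ∀ k, x (k + 1) ∈ D)
    (hΦx : ∀ k, 0 ≤ Φ (x (k + 1)))
    (hx : ∀ k, ∀ z ∈ D,
      Φ (x (k + 1)) + ⟪τ⁻¹ • (x k - τ • (L†) (y k) - x (k + 1)) + (L†) ys, z - x (k + 1)⟫ ≤ Φ z)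
    (hy : ∀ k, Ψ (y (k + 1)) + ⟪σ⁻¹ • (y k + σ • L (x (k + 1) + θ • (x (k + 1) - x k)) - y (k + 1))
      - L xs, ys - y (k + 1)⟫ ≤ Ψ ys) (K : ℕ) :
    ∑ k ∈ Finset.range K, (Φ (x (k + 1)) + Ψ (y (k + 1)))
      ≤ cpEnergy L τ σ θ (Φ (x 1)) (x 1 - xs) (x 1 - x 0) (y 0 - ys) :=
  sum_range_le_of_add_le
    (V := fun k => cpEnergy L τ σ θ (Φ (x (k + 1))) (x (k + 1) - xs) (x (k + 1) - x k) (y k - ys))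
    (fun k => cpEnergy_step hτ hσ hθ hstep hΦ hΨ (hx k _ (hxD (k + 1)))
      (fun z hz => hx (k + 1) z (by rcases hz with rfl | rfl; exacts [hxD k, hxs])) (hy k))
    (fun k => cpEnergy_nonneg hτ hσ hθ hstep (hΦx k) _ _ _) K

theorem bregman_sum_le_cpEnergy [CompleteSpace 𝓗] [CompleteSpace 𝓖] {f : 𝓗 → EReal}
    {h : 𝓖 → EReal} (hf : ∀ x, f x ≠ ⊥) (hfc : EConvex f) (hh : ∀ y, h y ≠ ⊥) (hhc : EConvex h)
    (hτ : 0 < τ) (hσ : 0 < σ) (hθ : 1 / 2 ≤ θ) (hstep : τ * σ * ‖L‖ ^ 2 ≤ 4 / (1 + 2 * θ))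
    {xs : 𝓗} {ys : 𝓖} (hxs : f xs ≠ ⊤) (hys : h ys ≠ ⊤) (hkkt : -(L†) ys ∈ ESubdiff f xs)
    {x : ℕ → 𝓗} {y : ℕ → 𝓖} (hx : ∀ k, IsProx τ f (x k - τ • (L†) (y k)) (x (k + 1)))
    (hy : ∀ k, IsProx σ h (y k + σ • L (x (k + 1) + θ • (x (k + 1) - x k))) (y (k + 1)))
    (K : ℕ) :
    ∑ k ∈ Finset.range K, (bregman (fun z => (f z).toReal) (-(L†) ys) xs (x (k + 1))
        + bregman (fun w => (h w).toReal) (L xs) ys (y (k + 1)))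
      ≤ cpEnergy L τ σ θ (bregman (fun z => (f z).toReal) (-(L†) ys) xs (x 1))
          (x 1 - xs) (x 1 - x 0) (y 0 - ys) := by
  have hstep' : σ * (2 * θ + 1) * ‖L‖ ^ 2 ≤ 4 / τ := by
    rw [le_div_iff₀ (by linarith)] at hstep
    rw [le_div_iff₀ hτ]
    linarith
  refine sum_le_cpEnergy hτ hσ hθ hstep' (bregman_self _ _ _) (bregman_self _ _ _)
    (D := {z | f z ≠ ⊤}) hxs (fun k => (hx k).ne_top_s13 hxs)
    (fun k => bregman_nonneg (toReal_add_inner_le_of_mem_eSubdiff hf hkkt ((hx k).ne_top_s13 hxs)))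
    (fun k z hz => ?_) (fun k => ?_) K
  · have := bregman_add_inner_le (φ := fun z => (f z).toReal)
      (toReal_add_inner_le_of_mem_eSubdiff hf ((hx k).inv_smul_sub_mem_eSubdiff hfc hf) hz)
      (-(L†) ys) xs
    rwa [sub_neg_eq_add] at this
  · exact bregman_add_inner_le (φ := fun w => (h w).toReal)
      (toReal_add_inner_le_of_mem_eSubdiff hh ((hy k).inv_smul_sub_mem_eSubdiff hhc hh) hys)
      (L xs) ys

end

theorem gap_partial_sums_bounded_general
    {𝓗 𝓖 : Type*}
    [NormedAddCommGroup 𝓗] [InnerProductSpace ℝ 𝓗] [CompleteSpace 𝓗]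
    [NormedAddCommGroup 𝓖] [InnerProductSpace ℝ 𝓖] [CompleteSpace 𝓖]
    (f : 𝓗 → EReal) (g : 𝓖 → EReal) (gs : 𝓖 → EReal)
    (hf₁ : EProper f) (hf₂ : EConvex f)
    (hg₁ : EProper g) (hg₂ : EConvex g) (hg₃ : LowerSemicontinuous g)
    (hgs : gs = EConj g)
    (L : 𝓗 →L[ℝ] 𝓖)
    (τ σ θ : ℝ) (hτ : 0 < τ) (hσ : 0 < σ)
    (hθ : 1 / 2 ≤ θ) (hstep : τ * σ * ‖L‖ ^ 2 ≤ 4 / (1 + 2 * θ))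
    (xstar : 𝓗) (ystar : 𝓖)
    (hkkt₁ : -((ContinuousLinearMap.adjoint L) ystar) ∈ ESubdiff f xstar)
    (hkkt₂ : L xstar ∈ ESubdiff gs ystar)
    (x : ℕ → 𝓗) (y : ℕ → 𝓖)
    (hx : ∀ k : ℕ, IsProx τ f (x k - τ • (ContinuousLinearMap.adjoint L) (y k)) (x (k + 1)))
    (hy : ∀ k : ℕ,
      IsProx σ gs (y k + σ • L (x (k + 1) + θ • (x (k + 1) - x k))) (y (k + 1)))
    (F : ℕ → EReal)
    (hF : ∀ k : ℕ, F k = f (x (k + 1)) - f xstar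
      + ((⟪(ContinuousLinearMap.adjoint L) ystar, x (k + 1) - xstar⟫ : ℝ) : EReal))
    (G : ℕ → EReal)
    (hG : ∀ k : ℕ, G k = gs (y (k + 1)) - gs ystar
      - ((⟪L xstar, y (k + 1) - ystar⟫ : ℝ) : EReal))
    (V : ℕ → EReal)
    (hV : ∀ k : ℕ, V k = (θ : EReal) * F k
      + ((1 / (2 * τ) * ‖x (k + 1) - xstar‖ ^ 2
        + 1 / (2 * σ) * ‖y k - ystar + (σ * θ) • (L (x (k + 1)) - L (x k))‖ ^ 2
        + θ / (2 * τ) * ‖x (k + 1) - x k‖ ^ 2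
        - σ * (4 * θ ^ 2 + 1) / 16 * ‖L (x (k + 1)) - L (x k)‖ ^ 2 : ℝ) : EReal))
    :
    ∀ K : ℕ, 0 < K →
      0 ≤ ∑ k ∈ Finset.range K, (F k + G k) ∧
      ∑ k ∈ Finset.range K, (F k + G k) ≤ V 0 := by
  have hgs_bot : ∀ y, gs y ≠ ⊥ := hgs ▸ eConj_ne_bot hg₁
  obtain ⟨y₀, hy₀⟩ : ∃ y, gs y ≠ ⊤ := hgs ▸ exists_eConj_ne_top hg₁ hg₂ hg₃
  have hxs : f xstar ≠ ⊤ := ne_top_of_mem_eSubdiff hkkt₁ hf₁.1.choose_spec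
  have hys : gs ystar ≠ ⊤ := ne_top_of_mem_eSubdiff hkkt₂ hy₀
  have hFk : ∀ k, F k = bregman (fun z => (f z).toReal) (-(ContinuousLinearMap.adjoint L) ystar)
      xstar (x (k + 1)) := fun k => by
    rw [hF k, coe_bregman_toReal hf₁.2 ((hx k).ne_top_s13 hxs) hxs, inner_neg_left, EReal.coe_neg,
      sub_eq_add_neg _ (-_ : EReal), neg_neg]
  have hGk : ∀ k, G k = bregman (fun w => (gs w).toReal) (L xstar) ystar (y (k + 1)) := fun k => by
    rw [hG k, coe_bregman_toReal hgs_bot ((hy k).ne_top_s13 hys) hys]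
  have hV0 : V 0 = cpEnergy L τ σ θ (bregman (fun z => (f z).toReal)
      (-(ContinuousLinearMap.adjoint L) ystar) xstar (x 1)) (x 1 - xstar) (x 1 - x 0)
      (y 0 - ystar) := by
    rw [hV 0, hFk 0]
    norm_cast
    simp only [cpEnergy, zero_add, map_sub]
    ring
  intro K _
  simp only [hFk, hGk, ← EReal.coe_add, ← EReal.coe_finset_sum, hV0, EReal.coe_nonneg,
    EReal.coe_le_coe_iff]
  refine ⟨Finset.sum_nonneg fun k _ => add_nonneg ?_ ?_, bregman_sum_le_cpEnergy hf₁.2 hf₂ hgs_bot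
    (hgs ▸ eConvex_eConj hg₁.2) hτ hσ hθ hstep hxs hys hkkt₁ hx hy K⟩
  · exact bregman_nonneg (toReal_add_inner_le_of_mem_eSubdiff hf₁.2 hkkt₁ ((hx k).ne_top_s13 hxs))
  · exact bregman_nonneg (toReal_add_inner_le_of_mem_eSubdiff hgs_bot hkkt₂ ((hy k).ne_top_s13 hys))

theorem gap_partial_sums_bounded
    {𝓗 𝓖 : Type*}
    [NormedAddCommGroup 𝓗] [InnerProductSpace ℝ 𝓗] [CompleteSpace 𝓗]
    [NormedAddCommGroup 𝓖] [InnerProductSpace ℝ 𝓖] [CompleteSpace 𝓖]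
    (f : 𝓗 → EReal) (g : 𝓖 → EReal) (gs : 𝓖 → EReal)
    (hf₁ : EProper f) (hf₂ : EConvex f) (hf₃ : LowerSemicontinuous f)
    (hg₁ : EProper g) (hg₂ : EConvex g) (hg₃ : LowerSemicontinuous g)
    (hgs : gs = EConj g)
    (L : 𝓗 →L[ℝ] 𝓖) (hL : L ≠ 0)
    (τ σ θ : ℝ) (hτ : 0 < τ) (hσ : 0 < σ)
    (hθ : 1 / 2 ≤ θ) (hstep : τ * σ * ‖L‖ ^ 2 ≤ 4 / (1 + 2 * θ))
    (hstrict : 1 / 2 < θ ∨ τ * σ * ‖L‖ ^ 2 < 4 / (1 + 2 * θ))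
    (xstar : 𝓗) (ystar : 𝓖)
    (hkkt₁ : -((ContinuousLinearMap.adjoint L) ystar) ∈ ESubdiff f xstar)
    (hkkt₂ : L xstar ∈ ESubdiff gs ystar)
    (x : ℕ → 𝓗) (y : ℕ → 𝓖)
    (hx : ∀ k : ℕ, IsProx τ f (x k - τ • (ContinuousLinearMap.adjoint L) (y k)) (x (k + 1)))
    (hy : ∀ k : ℕ,
      IsProx σ gs (y k + σ • L (x (k + 1) + θ • (x (k + 1) - x k))) (y (k + 1)))
    (F : ℕ → EReal)
    (hF : ∀ k : ℕ, F k = f (x (k + 1)) - f xstar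
      + ((⟪(ContinuousLinearMap.adjoint L) ystar, x (k + 1) - xstar⟫ : ℝ) : EReal))
    (G : ℕ → EReal)
    (hG : ∀ k : ℕ, G k = gs (y (k + 1)) - gs ystar
      - ((⟪L xstar, y (k + 1) - ystar⟫ : ℝ) : EReal))
    (V : ℕ → EReal)
    (hV : ∀ k : ℕ, V k = (θ : EReal) * F k
      + ((1 / (2 * τ) * ‖x (k + 1) - xstar‖ ^ 2
        + 1 / (2 * σ) * ‖y k - ystar + (σ * θ) • (L (x (k + 1)) - L (x k))‖ ^ 2
        + θ / (2 * τ) * ‖x (k + 1) - x k‖ ^ 2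
        - σ * (4 * θ ^ 2 + 1) / 16 * ‖L (x (k + 1)) - L (x k)‖ ^ 2 : ℝ) : EReal))
    :
    ∀ K : ℕ, 0 < K →
      0 ≤ ∑ k ∈ Finset.range K, (F k + G k) ∧
      ∑ k ∈ Finset.range K, (F k + G k) ≤ V 0 :=
  gap_partial_sums_bounded_general f g gs hf₁ hf₂ hg₁ hg₂ hg₃ hgs L τ σ θ hτ hσ hθ hstep xstar ystar
    hkkt₁ hkkt₂ x y hx hy F hF G hG V hV
end
end

section
/- Let θ > 1/2 and τ, σ > 0 satisfy τσ ≥ 4/(1 + 2θ). Then the discriminant τσ(τσ(1+θ)² − 4) is nonnegative, and the two real eigenvalues λ₁ = (2 − τσ(1+θ) + √(τσ(τσ(1+θ)² − 4)))/2 and λ₂ = (2 − τσ(1+θ) − √(τσ(τσ(1+θ)² − 4)))/2 of the 2×2 real matrix M = [[1, −τ], [σ, 1 − τσ(1+θ)]] satisfy λ₂ ≤ −1 and λ₂ < λ₁ < 1; in particular, M has an eigenvalue of magnitude at least 1. -/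
open scoped RealInnerProductSpace
open Filter Topology

noncomputable section

/-! The characteristic polynomial of `M` is `p(λ) = λ² - (2 - τσ(1+θ))λ + (1 - τσθ)`, with
discriminant `τσ(τσ(1+θ)² - 4) > 0`. The step-size condition says exactly that
`p(-1) = 4 - τσ(1+2θ) ≤ 0`, so `-1` lies between the roots; and `p(1) = τσ > 0` with the vertex
`1 - τσ(1+θ)/2` left of `1` puts both roots below `1`. -/

theorem Matrix.hasEigenvalue_toLin'_fin_two_iff {R : Type*} [CommRing R] [IsDomain R]
    (A : Matrix (Fin 2) (Fin 2) R) (μ : R) :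
    Module.End.HasEigenvalue (Matrix.toLin' A) μ ↔ μ ^ 2 - A.trace * μ + A.det = 0 := by
  rw [Module.End.hasEigenvalue_iff_isRoot_charpoly, Matrix.charpoly_toLin',
    Matrix.charpoly_fin_two]
  simp

def chambollePockMatrix (τ σ θ : ℝ) : Matrix (Fin 2) (Fin 2) ℝ :=
  !![1, -τ; σ, 1 - τ * σ * (1 + θ)]

theorem chambollePockMatrix_hasEigenvalue_iff (τ σ θ μ : ℝ) :
    Module.End.HasEigenvalue (Matrix.toLin' (chambollePockMatrix τ σ θ)) μ ↔
      μ ^ 2 - (2 - τ * σ * (1 + θ)) * μ + (1 - τ * σ * θ) = 0 := by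
  rw [Matrix.hasEigenvalue_toLin'_fin_two_iff, chambollePockMatrix, Matrix.trace_fin_two_of,
    Matrix.det_fin_two_of]
  constructor <;> intro h <;> linear_combination h

section MonicQuadratic

variable {T D s : ℝ}

theorem sq_sub_mul_add_eq_mul (hs : s ^ 2 = T ^ 2 - 4 * D) (x : ℝ) :
    x ^ 2 - T * x + D = (x - (T + s) / 2) * (x - (T - s) / 2) := by
  linear_combination hs / 4

theorem sq_sub_mul_add_eq_zero_at_roots (hs : s ^ 2 = T ^ 2 - 4 * D) :
    ((T + s) / 2) ^ 2 - T * ((T + s) / 2) + D = 0 ∧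
      ((T - s) / 2) ^ 2 - T * ((T - s) / 2) + D = 0 := by
  constructor <;> rw [sq_sub_mul_add_eq_mul hs] <;> ring

theorem le_of_sq_sub_mul_add_nonpos (hs : s ^ 2 = T ^ 2 - 4 * D) (hs₀ : 0 ≤ s) {x : ℝ}
    (hx : x ^ 2 - T * x + D ≤ 0) : (T - s) / 2 ≤ x := by
  by_contra! hlt
  rw [sq_sub_mul_add_eq_mul hs] at hx
  nlinarith

theorem lt_of_sq_sub_mul_add_pos (hs : s ^ 2 = T ^ 2 - 4 * D) (hs₀ : 0 ≤ s) {x : ℝ}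
    (hx : 0 < x ^ 2 - T * x + D) (hvertex : T / 2 < x) : (T + s) / 2 < x := by
  rw [sq_sub_mul_add_eq_mul hs] at hx
  have : 0 < x - (T - s) / 2 := by linarith
  linarith [(pos_iff_pos_of_mul_pos hx).2 this]

end MonicQuadratic

theorem four_lt_mul_one_add_sq {t θ : ℝ} (ht : 0 < t) (hθ : θ ≠ 0) (h : 4 ≤ t * (1 + 2 * θ)) :
    4 < t * (1 + θ) ^ 2 := by
  have : 0 < t * θ ^ 2 := by positivity
  linear_combination h + this

theorem counterexample_eigenvalues
    (θ τ σ : ℝ) (hθ : 1 / 2 < θ) (hτ : 0 < τ) (hσ : 0 < σ)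
    (hstep : 4 / (1 + 2 * θ) ≤ τ * σ)
    :
    0 ≤ τ * σ * (τ * σ * (1 + θ) ^ 2 - 4) ∧
    Module.End.HasEigenvalue
      (Matrix.toLin' (!![1, -τ; σ, 1 - τ * σ * (1 + θ)] : Matrix (Fin 2) (Fin 2) ℝ))
      ((2 - τ * σ * (1 + θ) + Real.sqrt (τ * σ * (τ * σ * (1 + θ) ^ 2 - 4))) / 2) ∧
    Module.End.HasEigenvalue
      (Matrix.toLin' (!![1, -τ; σ, 1 - τ * σ * (1 + θ)] : Matrix (Fin 2) (Fin 2) ℝ))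
      ((2 - τ * σ * (1 + θ) - Real.sqrt (τ * σ * (τ * σ * (1 + θ) ^ 2 - 4))) / 2) ∧
    (2 - τ * σ * (1 + θ) - Real.sqrt (τ * σ * (τ * σ * (1 + θ) ^ 2 - 4))) / 2 ≤ -1 ∧
    (2 - τ * σ * (1 + θ) - Real.sqrt (τ * σ * (τ * σ * (1 + θ) ^ 2 - 4))) / 2
      < (2 - τ * σ * (1 + θ) + Real.sqrt (τ * σ * (τ * σ * (1 + θ) ^ 2 - 4))) / 2 ∧
    (2 - τ * σ * (1 + θ) + Real.sqrt (τ * σ * (τ * σ * (1 + θ) ^ 2 - 4))) / 2 < 1 ∧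
    ∃ μ : ℝ, Module.End.HasEigenvalue
      (Matrix.toLin' (!![1, -τ; σ, 1 - τ * σ * (1 + θ)] : Matrix (Fin 2) (Fin 2) ℝ)) μ ∧
      1 ≤ |μ| := by
  have ht : 0 < τ * σ := mul_pos hτ hσ
  have hstep' : 4 ≤ τ * σ * (1 + 2 * θ) := (div_le_iff₀ (by linarith)).1 hstep
  have hdisc : 0 < τ * σ * (τ * σ * (1 + θ) ^ 2 - 4) :=
    mul_pos ht (sub_pos.2 (four_lt_mul_one_add_sq ht (by positivity) hstep'))
  set r := Real.sqrt (τ * σ * (τ * σ * (1 + θ) ^ 2 - 4))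
  have hr : r ^ 2 = (2 - τ * σ * (1 + θ)) ^ 2 - 4 * (1 - τ * σ * θ) := by
    rw [Real.sq_sqrt hdisc.le]; ring
  have hr₀ : 0 < r := Real.sqrt_pos.2 hdisc
  obtain ⟨hroot₁, hroot₂⟩ := sq_sub_mul_add_eq_zero_at_roots hr
  have heig₁ := (chambollePockMatrix_hasEigenvalue_iff τ σ θ _).2 hroot₁
  have heig₂ := (chambollePockMatrix_hasEigenvalue_iff τ σ θ _).2 hroot₂
  have hle : (2 - τ * σ * (1 + θ) - r) / 2 ≤ -1 :=
    le_of_sq_sub_mul_add_nonpos hr hr₀.le (by linarith)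
  have hvertex : 0 < τ * σ * (1 + θ) := mul_pos ht (by linarith)
  have hlt : (2 - τ * σ * (1 + θ) + r) / 2 < 1 :=
    lt_of_sq_sub_mul_add_pos hr hr₀.le (by linarith) (by linarith)
  exact ⟨hdisc.le, heig₁, heig₂, hle, by linarith, hlt, _, heig₂, le_abs.2 (Or.inr (by linarith))⟩
end
end

section
/- Consider the Chambolle–Pock method applied to the scalar saddle-point problem min_{x∈ℝ} max_{y∈ℝ} xy (i.e. f = g* = 0, L = 1), whose iteration reads x_{k+1} = x_k − τ y_k, y_{k+1} = y_k + σ(x_{k+1} + θ(x_{k+1} − x_k)). If θ > 1/2 and τ, σ > 0 satisfy τσ ≥ 4/(1 + 2θ), then there exists an initial point (x₀, y₀) ∈ ℝ² such that the sequence (x_k, y_k) does not converge; in particular, it does not converge to the unique saddle point (0, 0). -/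
open scoped RealInnerProductSpace
open Filter Topology

noncomputable section

/-!
The iteration matrix `[[1, -τ], [σ, 1 - τσ(1+θ)]]` has characteristic polynomial
`λ² - (2 - τσ(1+θ)) λ + (1 - τσθ)`, whose value at `-1` is `4 - τσ(1+2θ) ≤ 0`. So it has a real
eigenvalue `λ ≤ -1`, and started at the eigenvector `(1, (1-λ)/τ)` the iterates are `λ^k` times
that vector, which oscillate without converging.
-/

lemma exists_root_le_of_quadratic_nonpos {b c t : ℝ} (h : t ^ 2 + b * t + c ≤ 0) :
    ∃ l ≤ t, l ^ 2 + b * l + c = 0 := by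
  have hdisc : (2 * t + b) ^ 2 ≤ b ^ 2 - 4 * c := by nlinarith
  set s := Real.sqrt (b ^ 2 - 4 * c)
  have hs : s ^ 2 = b ^ 2 - 4 * c := Real.sq_sqrt ((sq_nonneg _).trans hdisc)
  have hbound : -(2 * t + b) ≤ s := neg_le.mp (abs_le.mp (Real.abs_le_sqrt hdisc)).1
  exact ⟨(-b - s) / 2, by linarith, by linear_combination hs / 4⟩

lemma not_tendsto_pow_of_one_le_norm {𝕜 : Type*} [NormedField 𝕜] {l : 𝕜} (hl : 1 ≤ ‖l‖)
    (hl1 : l ≠ 1) (p : 𝕜) : ¬Tendsto (fun k : ℕ => l ^ k) atTop (𝓝 p) := by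
  intro hp
  have hfix : l * p = p := by
    refine tendsto_nhds_unique (hp.const_mul l) ?_
    simpa only [Function.comp_def, pow_succ'] using hp.comp (tendsto_add_atTop_nat 1)
  have hp0 : p = 0 := by
    have : (l - 1) * p = 0 := by linear_combination hfix
    exact (mul_eq_zero.mp this).resolve_left (sub_ne_zero.mpr hl1)
  subst hp0
  have hnorm : Tendsto (fun k : ℕ => ‖l ^ k‖) atTop (𝓝 0) := tendsto_zero_iff_norm_tendsto_zero.mp hp
  exact zero_lt_one.not_ge <|
    ge_of_tendsto' hnorm fun k => by simpa only [norm_pow] using one_le_pow₀ hl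

lemma chambollePock_geometric {θ τ σ l : ℝ} (hτ : τ ≠ 0)
    (hl : l ^ 2 - (2 - τ * σ * (1 + θ)) * l + (1 - τ * σ * θ) = 0) (k : ℕ) :
    l ^ (k + 1) = l ^ k - τ * ((1 - l) / τ * l ^ k) ∧
      (1 - l) / τ * l ^ (k + 1) = (1 - l) / τ * l ^ k + σ * (l ^ (k + 1) + θ * (l ^ (k + 1) - l ^ k)) := by
  constructor
  · field_simp
    ring
  · field_simp
    linear_combination (-l ^ k) * hl

theorem counterexample_nonconvergence_general
    (θ τ σ : ℝ) (hθ : 1 / 2 < θ) (hτ : 0 < τ)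
    (hstep : 4 / (1 + 2 * θ) ≤ τ * σ)
    :
    ∃ x y : ℕ → ℝ,
      (∀ k : ℕ, x (k + 1) = x k - τ * y k) ∧
      (∀ k : ℕ, y (k + 1) = y k + σ * (x (k + 1) + θ * (x (k + 1) - x k))) ∧
      ¬(∃ p : ℝ × ℝ, Tendsto (fun k => (x k, y k)) atTop (𝓝 p)) ∧
      ¬Tendsto (fun k => (x k, y k)) atTop (𝓝 ((0 : ℝ), (0 : ℝ))) := by
  have hcharpoly : (-1) ^ 2 - (2 - τ * σ * (1 + θ)) * (-1) + (1 - τ * σ * θ) ≤ 0 := by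
    rw [div_le_iff₀ (by linarith)] at hstep
    linarith
  obtain ⟨l, hl, hroot⟩ := exists_root_le_of_quadratic_nonpos
    (b := -(2 - τ * σ * (1 + θ))) (c := 1 - τ * σ * θ) (t := -1) (by linarith)
  have heigen : l ^ 2 - (2 - τ * σ * (1 + θ)) * l + (1 - τ * σ * θ) = 0 := by linarith
  have hdiv := not_tendsto_pow_of_one_le_norm (l := l)
    (by rw [Real.norm_eq_abs, abs_of_neg (by linarith)]; linarith) (by linarith)
  refine ⟨fun k => l ^ k, fun k => (1 - l) / τ * l ^ k,
    fun k => (chambollePock_geometric hτ.ne' heigen k).1,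
    fun k => (chambollePock_geometric hτ.ne' heigen k).2, ?_, ?_⟩
  · rintro ⟨p, hp⟩
    exact hdiv p.1 hp.fst_nhds
  · exact fun hp => hdiv 0 hp.fst_nhds

theorem counterexample_nonconvergence
    (θ τ σ : ℝ) (hθ : 1 / 2 < θ) (hτ : 0 < τ) (hσ : 0 < σ)
    (hstep : 4 / (1 + 2 * θ) ≤ τ * σ)
    :
    ∃ x y : ℕ → ℝ,
      (∀ k : ℕ, x (k + 1) = x k - τ * y k) ∧
      (∀ k : ℕ, y (k + 1) = y k + σ * (x (k + 1) + θ * (x (k + 1) - x k))) ∧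
      ¬(∃ p : ℝ × ℝ, Tendsto (fun k => (x k, y k)) atTop (𝓝 p)) ∧
      ¬Tendsto (fun k => (x k, y k)) atTop (𝓝 ((0 : ℝ), (0 : ℝ))) :=
  counterexample_nonconvergence_general θ τ σ hθ hτ hstep
end
end

section
/- Let (x_k), (y_k) be generated by the Chambolle–Pock iteration x_{k+1} = prox_{τf}(x_k − τ L* y_k), y_{k+1} = prox_{σ g*}(y_k + σ L(x_{k+1} + θ(x_{k+1} − x_k))), with θ > 1/2 and τ, σ > 0 satisfying the boundary condition τσ‖L‖² = 4/(1 + 2θ), and let (x⋆, y⋆) be a KKT point (−L*y⋆ ∈ ∂f(x⋆), Lx⋆ ∈ ∂g*(y⋆)). Define F_k, G_k and V_k as in the Lyapunov analysis: F_k = f(x_{k+1}) − f(x⋆) + ⟨L*y⋆, x_{k+1} − x⋆⟩, G_k = g*(y_{k+1}) − g*(y⋆) − ⟨Lx⋆, y_{k+1} − y⋆⟩, and V_k = θF_k + (1/2τ)‖x_{k+1} − x⋆‖² + (1/2σ)‖y_k − y⋆ + σθ(Lx_{k+1} − Lx_k)‖² + (θ/2τ)‖x_{k+1} − x_k‖²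 − (σ(4θ²+1)/16)‖Lx_{k+1} − Lx_k‖². Then for every nonnegative integer k, V_{k+1} − V_k + F_k + G_k ≤ −(1/2σ)‖y_{k+1} − y_k − σ((1/2)(Lx_{k+1} − Lx_{k+2}) − θ(Lx_k − Lx_{k+1}))‖² − ((2θ − 1)/(4τ(1 + 2θ)))‖x_{k+2} − x_k‖². -/
open scoped RealInnerProductSpace
open Filter Topology

noncomputable section

section Aux

lemma prox_ne_top {E : Type*} [NormedAddCommGroup E] [InnerProductSpace ℝ E]
    {τ : ℝ} {f : E → EReal} {xh p : E}
    (hprox : IsProx τ f xh p) (hex : ∃ z, f z ≠ ⊤) (hbot : ∀ z, f z ≠ ⊥) :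
    f p ≠ ⊤ := by
  obtain ⟨z₀, hz₀⟩ := hex
  intro hp
  have h := hprox z₀
  rw [hp] at h
  have hz0r : f z₀ = ((f z₀).toReal : EReal) := (EReal.coe_toReal hz₀ (hbot z₀)).symm
  rw [hz0r, EReal.top_add_coe, ← EReal.coe_add, top_le_iff] at h
  exact (EReal.coe_ne_top _) h

lemma prox_subgrad {E : Type*} [NormedAddCommGroup E] [InnerProductSpace ℝ E]
    {τ : ℝ} {f : E → EReal} {xh p : E} (hτ : 0 < τ)
    (hconv : EConvex f) (hprox : IsProx τ f xh p)
    (hex : ∃ z, f z ≠ ⊤) (hbot : ∀ z, f z ≠ ⊥) :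
    ∀ z : E, f p + ((⟪xh - p, z - p⟫ / τ : ℝ) : EReal) ≤ f z := by
  intro z
  have hptop : f p ≠ ⊤ := prox_ne_top hprox hex hbot
  set c : ℝ := (f p).toReal with hc
  have hpc : f p = (c : EReal) := (EReal.coe_toReal hptop (hbot p)).symm
  by_cases hzt : f z = ⊤
  · rw [hzt]; exact le_top
  set d : ℝ := (f z).toReal with hd
  have hzc : f z = (d : EReal) := (EReal.coe_toReal hzt (hbot z)).symm
  rw [hpc, hzc, ← EReal.coe_add, EReal.coe_le_coe_iff]
  set k : ℝ := 1 / (2 * τ) with hk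
  have hkpos : 0 < k := by positivity
  set I : ℝ := ⟪xh - p, z - p⟫ with hI
  have key : ∀ lam : ℝ, 0 < lam → lam ≤ 1 →
      0 ≤ lam * (d - c) - 2 * k * lam * I + k * lam ^ 2 * ‖z - p‖ ^ 2 := by
    intro lam h0 h1
    have hvec : lam • z + (1 - lam) • p = p + lam • (z - p) := by
      rw [smul_sub, sub_smul, one_smul]; abel
    have hcv := hconv z p lam (1 - lam) h0.le (by linarith) (by ring)
    rw [hvec, hpc, hzc] at hcv
    have hcv' : f (p + lam • (z - p)) ≤ ((lam * d + (1 - lam) * c : ℝ) : EReal) := by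
      refine hcv.trans_eq ?_
      rw [← EReal.coe_mul, ← EReal.coe_mul, ← EReal.coe_add]
    have hpr := hprox (p + lam • (z - p))
    rw [hpc] at hpr
    have hpr2 : ((c + k * ‖p - xh‖ ^ 2 : ℝ) : EReal)
        ≤ ((lam * d + (1 - lam) * c + k * ‖p + lam • (z - p) - xh‖ ^ 2 : ℝ) : EReal) := by
      push_cast
      calc ((c : EReal) + ((k : ℝ) : EReal) * (‖p - xh‖ ^ 2 : ℝ))
          ≤ f (p + lam • (z - p)) + ((k * ‖p + lam • (z - p) - xh‖ ^ 2 : ℝ) : EReal) := by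
            have h := hpr
            rw [show ((1 / (2*τ) * ‖p - xh‖^2 : ℝ) : EReal) = ((k * ‖p - xh‖^2 : ℝ) : EReal) by rw [hk],
              show ((1 / (2*τ) * ‖p + lam • (z - p) - xh‖^2 : ℝ) : EReal) = ((k * ‖p + lam • (z - p) - xh‖^2 : ℝ) : EReal) by rw [hk]] at h
            calc ((c : EReal) + ((k : ℝ) : EReal) * ((‖p - xh‖ ^ 2 : ℝ) : EReal))
                = (c : EReal) + ((k * ‖p - xh‖ ^ 2 : ℝ) : EReal) := by norm_cast
              _ ≤ _ := h
        _ ≤ ((lam * d + (1 - lam) * c : ℝ) : EReal) + ((k * ‖p + lam • (z - p) - xh‖ ^ 2 : ℝ) : EReal) :=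
            add_le_add hcv' le_rfl
        _ = _ := by push_cast; ring_nf
    rw [EReal.coe_le_coe_iff] at hpr2
    have hexp : ‖p + lam • (z - p) - xh‖ ^ 2
        = ‖p - xh‖ ^ 2 + 2 * lam * ⟪p - xh, z - p⟫ + lam ^ 2 * ‖z - p‖ ^ 2 := by
      have hv2 : p + lam • (z - p) - xh = (p - xh) + lam • (z - p) := by abel
      rw [hv2, norm_add_sq_real, real_inner_smul_right, norm_smul]
      simp [mul_pow, sq_abs]
      ring
    have hinn : ⟪p - xh, z - p⟫ = -I := by
      rw [hI, ← inner_neg_left, neg_sub]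
    rw [hexp, hinn] at hpr2
    nlinarith [hpr2]
  by_contra hcon
  push_neg at hcon
  set gap : ℝ := c + I / τ - d with hgap
  have hgappos : 0 < gap := by rw [hgap]; linarith
  have hIk : I / τ = 2 * k * I := by rw [hk]; field_simp
  set den : ℝ := k * ‖z - p‖ ^ 2 + 1 with hden
  have hdenpos : 0 < den := by positivity
  set lam := min 1 (gap / den) with hlam
  have hlam1 : lam ≤ 1 := min_le_left _ _
  have hlam2 : lam ≤ gap / den := min_le_right _ _
  have hlampos : 0 < lam := lt_min one_pos (by positivity)
  have h := key lam hlampos hlam1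
  have h2 : lam * den ≤ gap := (le_div_iff₀ hdenpos).mp hlam2
  have hdc : d - c = 2 * k * I - gap := by rw [hgap, hIk]; ring
  have hdc2 : lam * (d - c) = lam * (2 * k * I - gap) := by rw [hdc]
  have h' : 0 ≤ -(lam * gap) + k * lam ^ 2 * ‖z - p‖ ^ 2 := by nlinarith [h, hdc2]
  have h6 : k * lam ^ 2 * ‖z - p‖ ^ 2 = lam ^ 2 * (den - 1) := by rw [hden]; ring
  nlinarith [h', h6, h2, hlampos]

lemma econj_ne_bot {E : Type*} [NormedAddCommGroup E] [InnerProductSpace ℝ E]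
    {g : E → EReal} (x₀ : E) (h₀ : g x₀ ≠ ⊤) (h₀' : g x₀ ≠ ⊥) :
    ∀ y, EConj g y ≠ ⊥ := by
  intro y hbot
  have hle : ((⟪x₀, y⟫ : ℝ) : EReal) - g x₀ ≤ EConj g y :=
    le_iSup (fun x => ((⟪x, y⟫ : ℝ) : EReal) - g x) x₀
  rw [hbot, le_bot_iff] at hle
  rw [← EReal.coe_toReal h₀ h₀', ← EReal.coe_sub] at hle
  exact EReal.coe_ne_bot _ hle

lemma econj_convex {E : Type*} [NormedAddCommGroup E] [InnerProductSpace ℝ E]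
    (g : E → EReal) : EConvex (EConj g) := by
  intro u v a b ha hb hab
  refine iSup_le fun z => ?_
  have h1 : ((⟪z, u⟫ : ℝ) : EReal) - g z ≤ EConj g u :=
    le_iSup (fun w => ((⟪w, u⟫ : ℝ) : EReal) - g w) z
  have h2 : ((⟪z, v⟫ : ℝ) : EReal) - g z ≤ EConj g v :=
    le_iSup (fun w => ((⟪w, v⟫ : ℝ) : EReal) - g w) z
  have h1' : (a : EReal) * (((⟪z, u⟫ : ℝ) : EReal) - g z) ≤ (a : EReal) * EConj g u :=
    mul_le_mul_of_nonneg_left h1 (EReal.coe_nonneg.2 ha)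
  have h2' : (b : EReal) * (((⟪z, v⟫ : ℝ) : EReal) - g z) ≤ (b : EReal) * EConj g v :=
    mul_le_mul_of_nonneg_left h2 (EReal.coe_nonneg.2 hb)
  have hinner : (⟪z, a • u + b • v⟫ : ℝ) = a * ⟪z, u⟫ + b * ⟪z, v⟫ := by
    rw [inner_add_right, real_inner_smul_right, real_inner_smul_right]
  refine le_trans ?_ (add_le_add h1' h2')
  rw [hinner]
  rcases (eq_top_or_lt_top (g z)) with hgz | hlt
  · rw [hgz, EReal.sub_top]
    exact bot_le
  rcases eq_bot_or_bot_lt (g z) with hgz | hbotlt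
  · rw [hgz, EReal.coe_sub_bot, EReal.coe_sub_bot, EReal.coe_sub_bot]
    have htop : (a : EReal) * ⊤ + (b : EReal) * ⊤ = ⊤ := by
      rcases ha.eq_or_lt with hz | hz
      · have hb1 : b = 1 := by linarith
        rw [← hz, hb1]
        simp
      · rw [EReal.coe_mul_top_of_pos hz]
        rcases hb.eq_or_lt with hzb | hzb
        · rw [← hzb]; simp
        · rw [EReal.coe_mul_top_of_pos hzb, EReal.top_add_top]
    rw [htop]
  · have hgzr : g z = ((g z).toReal : EReal) := (EReal.coe_toReal hlt.ne (hbotlt.ne')).symm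
    rw [hgzr]
    set r : ℝ := (g z).toReal
    rw [← EReal.coe_sub, ← EReal.coe_sub, ← EReal.coe_sub, ← EReal.coe_mul, ← EReal.coe_mul,
      ← EReal.coe_add, EReal.coe_le_coe_iff]
    have h3 : a * ⟪z, u⟫ + b * ⟪z, v⟫ - r = a * (⟪z, u⟫ - r) + b * (⟪z, v⟫ - r) := by
      linear_combination r * hab
    linarith [h3.le]

end Aux

set_option maxHeartbeats 4000000 in
theorem boundary_lyapunov_inequality
    {𝓗 𝓖 : Type*}
    [NormedAddCommGroup 𝓗] [InnerProductSpace ℝ 𝓗] [CompleteSpace 𝓗]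
    [NormedAddCommGroup 𝓖] [InnerProductSpace ℝ 𝓖] [CompleteSpace 𝓖]
    (f : 𝓗 → EReal) (g : 𝓖 → EReal) (gs : 𝓖 → EReal)
    (hf₁ : EProper f) (hf₂ : EConvex f) (hf₃ : LowerSemicontinuous f)
    (hg₁ : EProper g) (hg₂ : EConvex g) (hg₃ : LowerSemicontinuous g)
    (hgs : gs = EConj g)
    (L : 𝓗 →L[ℝ] 𝓖) (hL : L ≠ 0)
    (τ σ θ : ℝ) (hτ : 0 < τ) (hσ : 0 < σ)
    (hθ : 1 / 2 < θ) (hstep : τ * σ * ‖L‖ ^ 2 = 4 / (1 + 2 * θ))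
    (xstar : 𝓗) (ystar : 𝓖)
    (hkkt₁ : -((ContinuousLinearMap.adjoint L) ystar) ∈ ESubdiff f xstar)
    (hkkt₂ : L xstar ∈ ESubdiff gs ystar)
    (x : ℕ → 𝓗) (y : ℕ → 𝓖)
    (hx : ∀ k : ℕ, IsProx τ f (x k - τ • (ContinuousLinearMap.adjoint L) (y k)) (x (k + 1)))
    (hy : ∀ k : ℕ,
      IsProx σ gs (y k + σ • L (x (k + 1) + θ • (x (k + 1) - x k))) (y (k + 1)))
    (F : ℕ → EReal)
    (hF : ∀ k : ℕ, F k = f (x (k + 1)) - f xstar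
      + ((⟪(ContinuousLinearMap.adjoint L) ystar, x (k + 1) - xstar⟫ : ℝ) : EReal))
    (G : ℕ → EReal)
    (hG : ∀ k : ℕ, G k = gs (y (k + 1)) - gs ystar
      - ((⟪L xstar, y (k + 1) - ystar⟫ : ℝ) : EReal))
    (V : ℕ → EReal)
    (hV : ∀ k : ℕ, V k = (θ : EReal) * F k
      + ((1 / (2 * τ) * ‖x (k + 1) - xstar‖ ^ 2
        + 1 / (2 * σ) * ‖y k - ystar + (σ * θ) • (L (x (k + 1)) - L (x k))‖ ^ 2
        + θ / (2 * τ) * ‖x (k + 1) - x k‖ ^ 2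
        - σ * (4 * θ ^ 2 + 1) / 16 * ‖L (x (k + 1)) - L (x k)‖ ^ 2 : ℝ) : EReal))
    :
    ∀ k : ℕ, V (k + 1) - V k + F k + G k ≤
      ((-(1 / (2 * σ)) * ‖y (k + 1) - y k
          - σ • ((1 / 2 : ℝ) • (L (x (k + 1)) - L (x (k + 2)))
            - θ • (L (x k) - L (x (k + 1))))‖ ^ 2
        - (2 * θ - 1) / (4 * τ * (1 + 2 * θ)) * ‖x (k + 2) - x k‖ ^ 2 : ℝ) : EReal) := by
  intro k
  by_cases hdeg : ∀ w : 𝓖, gs w = ⊤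
  · rw [hG k, hdeg (y (k + 1)), hdeg ystar, EReal.sub_top, EReal.bot_sub, EReal.add_bot]
    exact bot_le
  push_neg at hdeg
  obtain ⟨w₀, hw₀⟩ := hdeg
  have hfbot := hf₁.2
  have hfex := hf₁.1
  obtain ⟨x₀g, hx₀g⟩ := hg₁.1
  have hgsbot : ∀ w, gs w ≠ ⊥ := by
    rw [hgs]; exact econj_ne_bot x₀g hx₀g (hg₁.2 x₀g)
  have hgsconv : EConvex gs := hgs ▸ econj_convex g
  have hgsex : ∃ w, gs w ≠ ⊤ := ⟨w₀, hw₀⟩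
  have h2θ : (0:ℝ) < 1 + 2 * θ := by linarith
  -- finiteness
  obtain ⟨z₀, hz₀⟩ := hfex
  have hfsne : f xstar ≠ ⊤ := by
    intro htop
    have h := hkkt₁ z₀
    rw [htop, EReal.top_add_coe, top_le_iff] at h
    exact hz₀ h
  have hgSne : gs ystar ≠ ⊤ := by
    intro htop
    have h := hkkt₂ w₀
    rw [htop, EReal.top_add_coe, top_le_iff] at h
    exact hw₀ h
  have hf1ne : f (x (k + 1)) ≠ ⊤ := prox_ne_top (hx k) ⟨z₀, hz₀⟩ hfbot
  have hf2ne : f (x (k + 2)) ≠ ⊤ := by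
    have := prox_ne_top (hx (k + 1)) ⟨z₀, hz₀⟩ hfbot
    simpa using this
  have hg1ne : gs (y (k + 1)) ≠ ⊤ := prox_ne_top (hy k) hgsex hgsbot
  set f1 : ℝ := (f (x (k + 1))).toReal with hf1def
  set f2 : ℝ := (f (x (k + 2))).toReal with hf2def
  set fs : ℝ := (f xstar).toReal with hfsdef
  set g1 : ℝ := (gs (y (k + 1))).toReal with hg1def
  set gS : ℝ := (gs ystar).toReal with hgSdef
  have hf1r : f (x (k + 1)) = (f1 : EReal) := (EReal.coe_toReal hf1ne (hfbot _)).symm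
  have hf2r : f (x (k + 2)) = (f2 : EReal) := (EReal.coe_toReal hf2ne (hfbot _)).symm
  have hfsr : f xstar = (fs : EReal) := (EReal.coe_toReal hfsne (hfbot _)).symm
  have hg1r : gs (y (k + 1)) = (g1 : EReal) := (EReal.coe_toReal hg1ne (hgsbot _)).symm
  have hgSr : gs ystar = (gS : EReal) := (EReal.coe_toReal hgSne (hgsbot _)).symm
  -- subgradient inequalities (real form)
  have hsub1 := prox_subgrad hτ hf₂ (hx (k + 1)) ⟨z₀, hz₀⟩ hfbot xstar
  have hsub2 := prox_subgrad hτ hf₂ (hx (k + 1)) ⟨z₀, hz₀⟩ hfbot (x (k + 1))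
  have hsub3 := prox_subgrad hτ hf₂ (hx k) ⟨z₀, hz₀⟩ hfbot (x (k + 2))
  have hsub4 := prox_subgrad hσ hgsconv (hy k) hgsex hgsbot ystar
  simp only [show k + 1 + 1 = k + 2 from rfl] at hsub1 hsub2
  rw [hf2r, hfsr, ← EReal.coe_add, EReal.coe_le_coe_iff] at hsub1
  rw [hf2r, hf1r, ← EReal.coe_add, EReal.coe_le_coe_iff] at hsub2
  rw [hf1r, hf2r, ← EReal.coe_add, EReal.coe_le_coe_iff] at hsub3
  rw [hg1r, hgSr, ← EReal.coe_add, EReal.coe_le_coe_iff] at hsub4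
  -- operator norm bounds
  have hTgen : ∀ v : 𝓗, (1 + 2 * θ) * τ * σ * ‖L v‖ ^ 2 ≤ 4 * ‖v‖ ^ 2 := by
    intro v
    have e1 : ‖L v‖ ^ 2 ≤ ‖L‖ ^ 2 * ‖v‖ ^ 2 := by
      nlinarith [L.le_opNorm v, norm_nonneg (L v), norm_nonneg v, L.opNorm_nonneg]
    have e2 : (1 + 2 * θ) * τ * σ * ‖L v‖ ^ 2 ≤ (1 + 2 * θ) * τ * σ * (‖L‖ ^ 2 * ‖v‖ ^ 2) := by
      apply mul_le_mul_of_nonneg_left e1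
      positivity
    have e3 : (1 + 2 * θ) * τ * σ * (‖L‖ ^ 2 * ‖v‖ ^ 2) = 4 * ‖v‖ ^ 2 := by
      have h4 : (1 + 2 * θ) * τ * σ * (‖L‖ ^ 2 * ‖v‖ ^ 2)
          = ((τ * σ * ‖L‖ ^ 2) * (1 + 2 * θ)) * ‖v‖ ^ 2 := by ring
      rw [h4, hstep]
      field_simp
    linarith
  have hT1 : (1 + 2 * θ) * τ * σ * ‖L (x (k + 2)) - L (x k)‖ ^ 2 ≤ 4 * ‖x (k + 2) - x k‖ ^ 2 := by
    have := hTgen (x (k + 2) - x k)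
    rwa [map_sub] at this
  have hT2 : (1 + 2 * θ) * τ * σ * ‖L (x (k + 1)) - L (x k) - (L (x (k + 2)) - L (x (k + 1)))‖ ^ 2
      ≤ 4 * ‖x (k + 1) - x k - (x (k + 2) - x (k + 1))‖ ^ 2 := by
    have := hTgen (x (k + 1) - x k - (x (k + 2) - x (k + 1)))
    rwa [map_sub, map_sub, map_sub] at this
  -- reduce the goal to a real inequality
  rw [hV (k + 1), hV k, hF (k + 1), hF k, hG k]
  simp only [show k + 1 + 1 = k + 2 from rfl]
  rw [hf1r, hf2r, hfsr, hg1r, hgSr]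
  norm_cast
  -- now pure real arithmetic
  have hdenpos : (0:ℝ) < 32 * τ * σ * (1 + 2 * θ) :=
    mul_pos (mul_pos (mul_pos (by norm_num : (0:ℝ) < 32) hτ) hσ) h2θ
  have q1 : (0:ℝ) ≤ (32 * τ * σ * (1 + 2 * θ)) * (fs - f2 - ⟪x (k + 1) - τ • (ContinuousLinearMap.adjoint L) (y (k + 1)) - x (k + 2), xstar - x (k + 2)⟫ / τ) :=
    mul_nonneg hdenpos.le (by linarith [hsub1])
  have q2 : (0:ℝ) ≤ (16 * τ * σ * (1 + 2 * θ) * (2 * θ - 1)) * (f1 - f2 - ⟪x (k + 1) - τ • (ContinuousLinearMap.adjoint L) (y (k + 1)) - x (k + 2), x (k + 1) - x (k + 2)⟫ / τ) :=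
    mul_nonneg (mul_nonneg (mul_pos (mul_pos (mul_pos (by norm_num : (0:ℝ) < 16) hτ) hσ) h2θ).le (by linarith : (0:ℝ) ≤ 2 * θ - 1)) (by linarith [hsub2])
  have q3 : (0:ℝ) ≤ (16 * τ * σ * (1 + 2 * θ)) * (f2 - f1 - ⟪x k - τ • (ContinuousLinearMap.adjoint L) (y k) - x (k + 1), x (k + 2) - x (k + 1)⟫ / τ) :=
    mul_nonneg (mul_pos (mul_pos (mul_pos (by norm_num : (0:ℝ) < 16) hτ) hσ) h2θ).le (by linarith [hsub3])
  have q4 : (0:ℝ) ≤ (32 * τ * σ * (1 + 2 * θ)) * (gS - g1 - ⟪y k + σ • L (x (k + 1) + θ • (x (k + 1) - x k)) - y (k + 1), ystar - y (k + 1)⟫ / σ) :=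
    mul_nonneg hdenpos.le (by linarith [hsub4])
  have q5 : (0:ℝ) ≤ (σ * (2 * θ - 1) ^ 2) * (4 * ‖x (k + 2) - x k‖ ^ 2 - (1 + 2 * θ) * τ * σ * ‖L (x (k + 2)) - L (x k)‖ ^ 2) :=
    mul_nonneg (by positivity) (by linarith [hT1])
  have q6 : (0:ℝ) ≤ (σ * (2 * θ + 1) ^ 2) * (4 * ‖x (k + 1) - x k - (x (k + 2) - x (k + 1))‖ ^ 2 - (1 + 2 * θ) * τ * σ * ‖L (x (k + 1)) - L (x k) - (L (x (k + 2)) - L (x (k + 1)))‖ ^ 2) :=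
    mul_nonneg (by positivity) (by linarith [hT2])
  have hkey : (-(1 / (2 * σ)) *
        ‖y (k + 1) - y k - σ • ((1 / 2 : ℝ) • (L (x (k + 1)) - L (x (k + 2))) - θ • (L (x k) - L (x (k + 1))))‖ ^ 2 -
      (2 * θ - 1) / (4 * τ * (1 + 2 * θ)) * ‖x (k + 2) - x k‖ ^ 2) - (θ * (f2 - fs + ⟪(ContinuousLinearMap.adjoint L) ystar, x (k + 2) - xstar⟫) +
            (1 / (2 * τ) * ‖x (k + 2) - xstar‖ ^ 2 +
                  1 / (2 * σ) * ‖y (k + 1) - ystar + (σ * θ) • (L (x (k + 2)) - L (x (k + 1)))‖ ^ 2 +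
                θ / (2 * τ) * ‖x (k + 2) - x (k + 1)‖ ^ 2 -
              σ * (4 * θ ^ 2 + 1) / 16 * ‖L (x (k + 2)) - L (x (k + 1))‖ ^ 2) -
          (θ * (f1 - fs + ⟪(ContinuousLinearMap.adjoint L) ystar, x (k + 1) - xstar⟫) +
            (1 / (2 * τ) * ‖x (k + 1) - xstar‖ ^ 2 +
                  1 / (2 * σ) * ‖y k - ystar + (σ * θ) • (L (x (k + 1)) - L (x k))‖ ^ 2 +
                θ / (2 * τ) * ‖x (k + 1) - x k‖ ^ 2 -
              σ * (4 * θ ^ 2 + 1) / 16 * ‖L (x (k + 1)) - L (x k)‖ ^ 2)) +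
        (f1 - fs + ⟪(ContinuousLinearMap.adjoint L) ystar, x (k + 1) - xstar⟫) +
      (g1 - gS - ⟪L xstar, y (k + 1) - ystar⟫)) =
      ((32 * τ * σ * (1 + 2 * θ)) * (fs - f2 - ⟪x (k + 1) - τ • (ContinuousLinearMap.adjoint L) (y (k + 1)) - x (k + 2), xstar - x (k + 2)⟫ / τ)
      + (16 * τ * σ * (1 + 2 * θ) * (2 * θ - 1)) * (f1 - f2 - ⟪x (k + 1) - τ • (ContinuousLinearMap.adjoint L) (y (k + 1)) - x (k + 2), x (k + 1) - x (k + 2)⟫ / τ)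
      + (16 * τ * σ * (1 + 2 * θ)) * (f2 - f1 - ⟪x k - τ • (ContinuousLinearMap.adjoint L) (y k) - x (k + 1), x (k + 2) - x (k + 1)⟫ / τ)
      + (32 * τ * σ * (1 + 2 * θ)) * (gS - g1 - ⟪y k + σ • L (x (k + 1) + θ • (x (k + 1) - x k)) - y (k + 1), ystar - y (k + 1)⟫ / σ)
      + (σ * (2 * θ - 1) ^ 2) * (4 * ‖x (k + 2) - x k‖ ^ 2 - (1 + 2 * θ) * τ * σ * ‖L (x (k + 2)) - L (x k)‖ ^ 2)
      + (σ * (2 * θ + 1) ^ 2) * (4 * ‖x (k + 1) - x k - (x (k + 2) - x (k + 1))‖ ^ 2 - (1 + 2 * θ) * τ * σ * ‖L (x (k + 1)) - L (x k) - (L (x (k + 2)) - L (x (k + 1)))‖ ^ 2)) / (32 * τ * σ * (1 + 2 * θ)) := by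
    simp only [← real_inner_self_eq_norm_sq]
    simp only [inner_sub_left, inner_sub_right, inner_add_left, inner_add_right,
      real_inner_smul_left, real_inner_smul_right, map_sub, map_add, map_smul,
      ContinuousLinearMap.adjoint_inner_left]
    simp only [real_inner_comm]
    field_simp
    ring
  have hfinal : (0:ℝ) ≤ (-(1 / (2 * σ)) *
        ‖y (k + 1) - y k - σ • ((1 / 2 : ℝ) • (L (x (k + 1)) - L (x (k + 2))) - θ • (L (x k) - L (x (k + 1))))‖ ^ 2 -
      (2 * θ - 1) / (4 * τ * (1 + 2 * θ)) * ‖x (k + 2) - x k‖ ^ 2) - (θ * (f2 - fs + ⟪(ContinuousLinearMap.adjoint L) ystar, x (k + 2) - xstar⟫) +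
            (1 / (2 * τ) * ‖x (k + 2) - xstar‖ ^ 2 +
                  1 / (2 * σ) * ‖y (k + 1) - ystar + (σ * θ) • (L (x (k + 2)) - L (x (k + 1)))‖ ^ 2 +
                θ / (2 * τ) * ‖x (k + 2) - x (k + 1)‖ ^ 2 -
              σ * (4 * θ ^ 2 + 1) / 16 * ‖L (x (k + 2)) - L (x (k + 1))‖ ^ 2) -
          (θ * (f1 - fs + ⟪(ContinuousLinearMap.adjoint L) ystar, x (k + 1) - xstar⟫) +
            (1 / (2 * τ) * ‖x (k + 1) - xstar‖ ^ 2 +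
                  1 / (2 * σ) * ‖y k - ystar + (σ * θ) • (L (x (k + 1)) - L (x k))‖ ^ 2 +
                θ / (2 * τ) * ‖x (k + 1) - x k‖ ^ 2 -
              σ * (4 * θ ^ 2 + 1) / 16 * ‖L (x (k + 1)) - L (x k)‖ ^ 2)) +
        (f1 - fs + ⟪(ContinuousLinearMap.adjoint L) ystar, x (k + 1) - xstar⟫) +
      (g1 - gS - ⟪L xstar, y (k + 1) - ystar⟫)) := by
    rw [hkey]
    apply div_nonneg _ hdenpos.le
    linarith [q1, q2, q3, q4, q5, q6]
  linarith [hfinal]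
end
end
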